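/- arXiv:1804.00748 — 4 statements merged into one kernel-verified Lean document; each statement's English description precedes it below -/
import Mathlib

section
/- There is a universal constant C > 0 with the following property: for every δ ≥ 0, every geodesic δ-hyperbolic metric space X, every isometry g of X, and every integer m ≥ 1, one has L(g^m) ≥ m·(L(g) − C·δ). In particular L(g) − C·δ ≤ ℓ(g) ≤ L(g). -/
open Pointwise Filter

/-- The joint displacement of a set of isometries at a point:
`L(S,x) = max_{s ∈ S} d(x, s x)`. -/
noncomputable def jointDispAt {X : Type*} [MetricSpace X] (S : Set (X ≃ᵢ X)) (x : X) : ℝ :=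
  sSup ((fun s : X ≃ᵢ X => dist x (s x)) '' S)

/-- The joint minimal displacement `L(S) = inf_x L(S,x)`. -/
noncomputable def jointMinDisp {X : Type*} [MetricSpace X] (S : Set (X ≃ᵢ X)) : ℝ :=
  sInf (Set.range (jointDispAt S))

/-- The asymptotic joint displacement `ℓ(S) = lim_n L(S^n)/n`; the limit exists by
subadditivity, hence agrees with the `limsup` used here. -/
noncomputable def asympDisp {X : Type*} [MetricSpace X] (S : Set (X ≃ᵢ X)) : ℝ :=
  Filter.limsup (fun n : ℕ => jointMinDisp (S ^ n) / n) Filter.atTop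

/-- `λ(S) = max_{s ∈ S} ℓ(s)`. -/
noncomputable def lamD {X : Type*} [MetricSpace X] (S : Set (X ≃ᵢ X)) : ℝ :=
  sSup ((fun s : X ≃ᵢ X => asympDisp {s}) '' S)

/-- `λ_k(S) = max_{1 ≤ j ≤ k} λ(S^j)/j`. -/
noncomputable def lamK {X : Type*} [MetricSpace X] (k : ℕ) (S : Set (X ≃ᵢ X)) : ℝ :=
  sSup ((fun j : ℕ => lamD (S ^ j) / j) '' Set.Icc 1 k)

/-- `λ_∞(S) = sup_{j ≥ 1} λ(S^j)/j`. -/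
noncomputable def lamInf {X : Type*} [MetricSpace X] (S : Set (X ≃ᵢ X)) : ℝ :=
  sSup ((fun j : ℕ => lamD (S ^ j) / j) '' Set.Ici 1)

/-- A geodesic segment from `a` to `b`: an isometric image of the interval `[0, d(a,b)]`. -/
def IsGeodesicSegment {X : Type*} [MetricSpace X] (s : Set X) (a b : X) : Prop :=
  ∃ f : ℝ → X, f 0 = a ∧ f (dist a b) = b ∧
    (∀ u ∈ Set.Icc (0 : ℝ) (dist a b), ∀ v ∈ Set.Icc (0 : ℝ) (dist a b),
      dist (f u) (f v) = |u - v|) ∧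
    s = f '' Set.Icc (0 : ℝ) (dist a b)

/-- A geodesic metric space: every two points are joined by a geodesic segment. -/
def GeodesicSpace (X : Type*) [MetricSpace X] : Prop :=
  ∀ a b : X, ∃ s : Set X, IsGeodesicSegment s a b

/-- `δ`-hyperbolicity: every geodesic triangle is `δ`-thin, i.e. each side is contained in
the closed `δ`-neighborhood of the union of the other two sides. -/
def GromovHyperbolic (X : Type*) [MetricSpace X] (δ : ℝ) : Prop :=
  ∀ a b c : X, ∀ sab sbc sca : Set X,
    IsGeodesicSegment sab a b → IsGeodesicSegment sbc b c → IsGeodesicSegment sca c a →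
      (∀ x ∈ sab, ∃ y ∈ sbc ∪ sca, dist x y ≤ δ) ∧
      (∀ x ∈ sbc, ∃ y ∈ sab ∪ sca, dist x y ≤ δ) ∧
      (∀ x ∈ sca, ∃ y ∈ sab ∪ sbc, dist x y ≤ δ)

/-- The CAT(0) comparison inequality: for all `a b c` and every midpoint `m` of a geodesic
from `b` to `c`, `2 d(a,m)² ≤ d(a,b)² + d(a,c)² - d(b,c)²/2`. -/
def CAT0 (X : Type*) [MetricSpace X] : Prop :=
  ∀ a b c m : X, dist b m = dist b c / 2 → dist m c = dist b c / 2 →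
    2 * dist a m ^ 2 ≤ dist a b ^ 2 + dist a c ^ 2 - dist b c ^ 2 / 2

/-- A subset is (geodesically) convex if every geodesic segment between two of its points is
contained in it. -/
def GeodConvex {X : Type*} [MetricSpace X] (C : Set X) : Prop :=
  ∀ a ∈ C, ∀ b ∈ C, ∀ s : Set X, IsGeodesicSegment s a b → s ⊆ C

/-- Translation length `L(g) = inf_x d(x, g x)`. -/
noncomputable def transLen {X : Type*} [MetricSpace X] (g : X ≃ᵢ X) : ℝ :=
  sInf (Set.range fun x : X => dist x (g x))

/-- Asymptotic translation length `ℓ(g) = lim_n L(g^n)/n`. -/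
noncomputable def asympTransLen {X : Type*} [MetricSpace X] (g : X ≃ᵢ X) : ℝ :=
  Filter.limsup (fun n : ℕ => transLen (g ^ n) / n) Filter.atTop

section Helpers

variable {X : Type*} [MetricSpace X]

/-- Gromov product at `w`. -/
noncomputable def gro (w a b : X) : ℝ := (dist w a + dist w b - dist a b) / 2

theorem gro_nonneg (w a b : X) : 0 ≤ gro w a b := by
  have h := dist_triangle a w b
  unfold gro
  rw [dist_comm a w] at h
  linarith

theorem gro_comm (w a b : X) : gro w a b = gro w b a := by
  unfold gro
  rw [dist_comm a b]
  ring

theorem transLen_nonneg (g : X ≃ᵢ X) : 0 ≤ transLen g := by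
  apply Real.sInf_nonneg
  rintro _ ⟨x, rfl⟩
  exact dist_nonneg

theorem transLen_le (g : X ≃ᵢ X) (x : X) : transLen g ≤ dist x (g x) :=
  csInf_le ⟨0, by rintro _ ⟨y, rfl⟩; exact dist_nonneg⟩ ⟨x, rfl⟩

theorem abs_zero_sub' {u : ℝ} (h : 0 ≤ u) : |0 - u| = u := by
  rw [abs_sub_comm, sub_zero, abs_of_nonneg h]

theorem abs_sub_of_le' {u D : ℝ} (h : u ≤ D) : |u - D| = D - u := by
  rw [abs_sub_comm]
  exact abs_of_nonneg (by linarith)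

theorem seg_point {s : Set X} {a b : X} (h : IsGeodesicSegment s a b) {t : ℝ}
    (ht : t ∈ Set.Icc (0:ℝ) (dist a b)) :
    ∃ q ∈ s, dist a q = t ∧ dist q b = dist a b - t := by
  obtain ⟨f, h0, hD, hiso, him⟩ := h
  refine ⟨f t, by rw [him]; exact Set.mem_image_of_mem f ht, ?_, ?_⟩
  · have := hiso 0 ⟨le_refl 0, dist_nonneg⟩ t ht
    rw [h0] at this
    rw [this, abs_zero_sub' ht.1]
  · have := hiso t ht (dist a b) ⟨dist_nonneg, le_refl _⟩
    rw [hD] at this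
    rw [this, abs_sub_of_le' ht.2]

theorem seg_dist_sum {s : Set X} {a b : X} (h : IsGeodesicSegment s a b) {q : X}
    (hq : q ∈ s) : dist a q + dist q b = dist a b := by
  obtain ⟨f, h0, hD, hiso, him⟩ := h
  rw [him] at hq
  obtain ⟨u, hu, rfl⟩ := hq
  have h1 := hiso 0 ⟨le_refl 0, dist_nonneg⟩ u hu
  have h2 := hiso u hu (dist a b) ⟨dist_nonneg, le_refl _⟩
  rw [h0] at h1; rw [hD] at h2
  rw [h1, h2, abs_zero_sub' hu.1, abs_sub_of_le' hu.2]
  ring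

theorem seg_dist_eq {s : Set X} {a b : X} (h : IsGeodesicSegment s a b) {q p : X}
    (hq : q ∈ s) (hp : p ∈ s) : dist q p = |dist a q - dist a p| := by
  obtain ⟨f, h0, hD, hiso, him⟩ := h
  rw [him] at hq hp
  obtain ⟨u, hu, rfl⟩ := hq
  obtain ⟨v, hv, rfl⟩ := hp
  have h1 := hiso 0 ⟨le_refl 0, dist_nonneg⟩ u hu
  have h2 := hiso 0 ⟨le_refl 0, dist_nonneg⟩ v hv
  have h3 := hiso u hu v hv
  rw [h0] at h1 h2
  rw [h3, h1, h2, abs_zero_sub' hu.1, abs_zero_sub' hv.1]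

theorem seg_image (g : X ≃ᵢ X) {s : Set X} {a b : X} (h : IsGeodesicSegment s a b) :
    IsGeodesicSegment (g '' s) (g a) (g b) := by
  obtain ⟨f, h0, hD, hiso, him⟩ := h
  have hd : dist (g a) (g b) = dist a b := g.dist_eq a b
  refine ⟨fun u => g (f u), ?_, ?_, ?_, ?_⟩
  · show g (f 0) = g a
    rw [h0]
  · show g (f (dist (g a) (g b))) = g b
    rw [hd, hD]
  · intro u hu v hv
    rw [hd] at hu hv
    rw [g.dist_eq]
    exact hiso u hu v hv
  · rw [hd, him, Set.image_image]

/-- distance from any point to a point on a geodesic is at least the Gromov product. -/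
theorem gro_le_dist_of_mem_seg {s : Set X} {a b : X} (h : IsGeodesicSegment s a b) {q : X}
    (hq : q ∈ s) (w : X) : gro w a b ≤ dist w q := by
  have h1 := seg_dist_sum h hq
  have h2 := dist_triangle w q a
  have h3 := dist_triangle w q b
  have e1 : dist a q = dist q a := dist_comm a q
  have e2 : dist b q = dist q b := dist_comm b q
  unfold gro
  linarith

/-- In a slim geodesic space, some point of a geodesic from `x` to `y` is
`(x|y)_w + 2δ`-close to `w`. -/
theorem exists_near_seg {δ : ℝ} (geo : GeodesicSpace X) (hyp : GromovHyperbolic X δ)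
    {s : Set X} {x y : X} (hs : IsGeodesicSegment s x y) (w : X) :
    ∃ m ∈ s, dist w m ≤ gro w x y + 2 * δ := by
  obtain ⟨syw, hsyw⟩ := geo y w
  obtain ⟨swx, hswx⟩ := geo w x
  have ht : gro x w y ∈ Set.Icc (0:ℝ) (dist x y) := by
    refine ⟨gro_nonneg _ _ _, ?_⟩
    have h := dist_triangle x y w
    unfold gro
    have e1 : dist y w = dist w y := dist_comm y w
    linarith
  obtain ⟨m, hm, hxm, hmy⟩ := seg_point hs ht
  obtain ⟨slim, -, -⟩ := hyp x y w s syw swx hs hsyw hswx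
  obtain ⟨q, hq, hmq⟩ := slim m hm
  refine ⟨m, hm, ?_⟩
  have hwm : dist w m ≤ dist w q + dist q m := dist_triangle w q m
  have hqm : dist q m = dist m q := dist_comm q m
  cases hq with
  | inl hq =>
    have hsum := seg_dist_sum hsyw hq
    have h1 : dist y m ≤ dist y q + dist q m := dist_triangle y q m
    have e1 : dist m y = dist y m := dist_comm m y
    have e2 : dist w q = dist q w := dist_comm w q
    have e3 : dist w y = dist y w := dist_comm w y
    have e4 : dist x w = dist w x := dist_comm x w
    unfold gro at hxm hmy ⊢
    linarith
  | inr hq =>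
    have hsum := seg_dist_sum hswx hq
    have h1 : dist x m ≤ dist x q + dist q m := dist_triangle x q m
    have e1 : dist x q = dist q x := dist_comm x q
    have e2 : dist x m = dist m x := dist_comm x m
    have e3 : dist w x = dist x w := dist_comm w x
    have e4 : dist w y = dist y w := dist_comm w y
    unfold gro at hxm hmy ⊢
    linarith

/-- Four point inequality with constant `3δ`. -/
theorem four_point {δ : ℝ} (geo : GeodesicSpace X) (hyp : GromovHyperbolic X δ)
    (w x y z : X) : min (gro w x z) (gro w z y) ≤ gro w x y + 3 * δ := by
  obtain ⟨sxy, hsxy⟩ := geo x y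
  obtain ⟨syz, hsyz⟩ := geo y z
  obtain ⟨szx, hszx⟩ := geo z x
  obtain ⟨m, hm, hwm⟩ := exists_near_seg geo hyp hsxy w
  obtain ⟨slim, -, -⟩ := hyp x y z sxy syz szx hsxy hsyz hszx
  obtain ⟨q, hq, hmq⟩ := slim m hm
  have hwq : dist w q ≤ dist w m + dist m q := dist_triangle w m q
  cases hq with
  | inl hq =>
    have h1 : gro w y z ≤ dist w q := gro_le_dist_of_mem_seg hsyz hq w
    have h2 : gro w z y = gro w y z := gro_comm w z y
    refine le_trans (min_le_right _ _) ?_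
    rw [h2]
    linarith
  | inr hq =>
    have h1 : gro w z x ≤ dist w q := gro_le_dist_of_mem_seg hszx hq w
    have h2 : gro w x z = gro w z x := gro_comm w x z
    refine le_trans (min_le_left _ _) ?_
    rw [h2]
    linarith

theorem step1 {X : Type*} [MetricSpace X] {δ : ℝ} (hδ : 0 ≤ δ) (geo : GeodesicSpace X)
    (hyp : GromovHyperbolic X δ) (g : X ≃ᵢ X) (y : X) (hL : 2 * δ < transLen g) :
    gro (g y) y (g (g y)) ≤ (dist y (g y) - transLen g) / 2 + 2 * δ := by
  by_contra hcon
  push_neg at hcon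
  have hlL : transLen g ≤ dist y (g y) := transLen_le g y
  have hl0 : (0:ℝ) ≤ dist y (g y) := dist_nonneg
  obtain ⟨r, hr1, hr2, hr3⟩ :
      ∃ r : ℝ, (dist y (g y) - transLen g) / 2 + δ < r ∧
        r < gro (g y) y (g (g y)) - δ ∧ r < dist y (g y) / 2 := by
    have h1 : (dist y (g y) - transLen g) / 2 + δ
        < min (gro (g y) y (g (g y)) - δ) (dist y (g y) / 2) :=
      lt_min (by linarith) (by linarith)
    have h2 := min_le_left (gro (g y) y (g (g y)) - δ) (dist y (g y) / 2)
    have h3 := min_le_right (gro (g y) y (g (g y)) - δ) (dist y (g y) / 2)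
    exact ⟨((dist y (g y) - transLen g) / 2 + δ +
      min (gro (g y) y (g (g y)) - δ) (dist y (g y) / 2)) / 2,
      by linarith, by linarith, by linarith⟩
  have hr0 : (0:ℝ) ≤ r := by linarith
  obtain ⟨s1, hs1⟩ := geo y (g y)
  have hs2 : IsGeodesicSegment (g '' s1) (g y) (g (g y)) := seg_image g hs1
  obtain ⟨τ, hτ⟩ := geo (g (g y)) y
  obtain ⟨slim, -, -⟩ := hyp y (g y) (g (g y)) s1 (g '' s1) τ hs1 hs2 hτ
  have hlr : dist y (g y) - r ∈ Set.Icc (0:ℝ) (dist y (g y)) := ⟨by linarith, by linarith⟩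
  obtain ⟨p, hp, hyp2, hpg⟩ := seg_point hs1 hlr
  have hpgy : dist p (g y) = r := by rw [hpg]; ring
  obtain ⟨q, hq, hpq⟩ := slim p hp
  cases hq with
  | inl hq =>
    obtain ⟨q', hq', rfl⟩ := hq
    have hdgq : dist (g y) (g q') = dist y q' := g.dist_eq y q'
    have hur : |dist y q' - r| ≤ δ := by
      have t1 : dist (g y) (g q') ≤ dist (g y) p + dist p (g q') := dist_triangle _ _ _
      have t2 : dist (g y) p ≤ dist (g y) (g q') + dist (g q') p := dist_triangle _ _ _
      have e1 : dist (g y) p = dist p (g y) := dist_comm _ _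
      have e2 : dist (g q') p = dist p (g q') := dist_comm _ _
      rw [abs_le]
      constructor <;> linarith [hpgy, hpq]
    have hqp : dist (g q') (g p) = |dist y q' - (dist y (g y) - r)| := by
      rw [g.dist_eq, seg_dist_eq hs1 hq' hp, hyp2]
    have hLle : transLen g ≤ dist p (g p) := transLen_le g p
    have htri : dist p (g p) ≤ dist p (g q') + dist (g q') (g p) := dist_triangle _ _ _
    have habs : |dist y q' - (dist y (g y) - r)| ≤ δ + (dist y (g y) - 2 * r) := by
      rw [abs_le] at hur ⊢
      constructor <;> linarith
    rw [hqp] at htri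
    linarith
  | inr hq =>
    have h1 : gro (g y) (g (g y)) y ≤ dist (g y) q := gro_le_dist_of_mem_seg hτ hq (g y)
    have h2 : gro (g y) (g (g y)) y = gro (g y) y (g (g y)) := gro_comm _ _ _
    have h3 : dist (g y) q ≤ dist (g y) p + dist p q := dist_triangle _ _ _
    have e1 : dist (g y) p = dist p (g y) := dist_comm _ _
    linarith [hpgy, hpq]

theorem pow_apply_succ {X : Type*} [MetricSpace X] (g : X ≃ᵢ X) (n : ℕ) (x : X) :
    (g ^ (n + 1)) x = (g ^ n) (g x) := by
  rw [pow_succ]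
  rfl

theorem chain {X : Type*} [MetricSpace X] {δ : ℝ} (hδ : 0 ≤ δ) (geo : GeodesicSpace X)
    (hyp : GromovHyperbolic X δ) (g : X ≃ᵢ X) (hL : 10 * δ < transLen g) (y : X) :
    ∀ n : ℕ, (n : ℝ) * (transLen g - 10 * δ) ≤ dist y ((g ^ n) y) := by
  have hlL : transLen g ≤ dist y (g y) := transLen_le g y
  have hc : gro (g y) y (g (g y)) ≤ (dist y (g y) - transLen g) / 2 + 2 * δ :=
    step1 hδ geo hyp g y (by linarith)
  have hl_n : ∀ n : ℕ, dist ((g ^ n) y) ((g ^ (n + 1)) y) = dist y (g y) := by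
    intro n
    rw [pow_apply_succ]
    exact (g ^ n).dist_eq y (g y)
  have hinv : ∀ n : ℕ, gro ((g ^ (n + 1)) y) ((g ^ n) y) ((g ^ (n + 2)) y)
      = gro (g y) y (g (g y)) := by
    intro n
    have hp1 : (g ^ (n + 1)) y = (g ^ n) (g y) := pow_apply_succ g n y
    have h2' : (g ^ (n + 2)) y = (g ^ (n + 1)) (g y) := pow_apply_succ g (n + 1) y
    have hp2 : (g ^ (n + 2)) y = (g ^ n) (g (g y)) := by
      rw [h2', pow_apply_succ g n (g y)]
    unfold gro
    rw [hp1, hp2, (g ^ n).dist_eq (g y) y, (g ^ n).dist_eq (g y) (g (g y)),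
      (g ^ n).dist_eq y (g (g y))]
  have hβ : ∀ n : ℕ, gro ((g ^ n) y) y ((g ^ (n + 1)) y)
      ≤ (dist y (g y) - transLen g) / 2 + 2 * δ + 3 * δ := by
    intro n
    induction n with
    | zero =>
      have h0 : gro ((g ^ 0) y) y ((g ^ 1) y) = 0 := by
        unfold gro
        simp [pow_zero, pow_one, dist_self]
      rw [h0]
      linarith
    | succ n ih =>
      show gro ((g ^ (n + 1)) y) y ((g ^ (n + 2)) y)
        ≤ (dist y (g y) - transLen g) / 2 + 2 * δ + 3 * δ
      have h4 := four_point geo hyp ((g ^ (n + 1)) y) ((g ^ n) y) ((g ^ (n + 2)) y) y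
      have hr : gro ((g ^ (n + 1)) y) ((g ^ n) y) ((g ^ (n + 2)) y)
          ≤ (dist y (g y) - transLen g) / 2 + 2 * δ := by
        rw [hinv n]
        exact hc
      have hid : gro ((g ^ (n + 1)) y) ((g ^ n) y) y
          = dist y (g y) - gro ((g ^ n) y) y ((g ^ (n + 1)) y) := by
        unfold gro
        have e1 := hl_n n
        have e2 : dist ((g ^ (n + 1)) y) ((g ^ n) y) = dist ((g ^ n) y) ((g ^ (n + 1)) y) :=
          dist_comm _ _
        have e3 : dist ((g ^ (n + 1)) y) y = dist y ((g ^ (n + 1)) y) := dist_comm _ _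
        have e4 : dist ((g ^ n) y) y = dist y ((g ^ n) y) := dist_comm _ _
        linarith
      rcases min_le_iff.mp h4 with h | h
      · exfalso
        linarith
      · linarith
  intro n
  induction n with
  | zero => simp
  | succ n ih =>
    have hrec : dist y ((g ^ (n + 1)) y)
        = dist y ((g ^ n) y) + dist y (g y) - 2 * gro ((g ^ n) y) y ((g ^ (n + 1)) y) := by
      unfold gro
      have e1 := hl_n n
      have e4 : dist ((g ^ n) y) y = dist y ((g ^ n) y) := dist_comm _ _
      linarith
    have hstep := hβ n
    have hcast : ((n + 1 : ℕ) : ℝ) = (n : ℝ) + 1 := by push_cast; ring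
    rw [hcast, hrec]
    nlinarith

end Helpers

theorem dist_pow_le {X : Type*} [MetricSpace X] (g : X ≃ᵢ X) (x : X) :
    ∀ n : ℕ, dist x ((g ^ n) x) ≤ n * dist x (g x) := by
  intro n
  induction n with
  | zero => simp
  | succ n ih =>
    have h1 : dist x ((g ^ (n + 1)) x) ≤ dist x ((g ^ n) x)
        + dist ((g ^ n) x) ((g ^ (n + 1)) x) := dist_triangle _ _ _
    have h2 : dist ((g ^ n) x) ((g ^ (n + 1)) x) = dist x (g x) := by
      rw [pow_apply_succ]
      exact (g ^ n).dist_eq x (g x)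
    have hcast : ((n + 1 : ℕ) : ℝ) = (n : ℝ) + 1 := by push_cast; ring
    rw [hcast]
    linarith

theorem transLen_pow_div_le {X : Type*} [MetricSpace X] (g : X ≃ᵢ X) (n : ℕ) :
    transLen (g ^ n) / n ≤ transLen g := by
  rcases isEmpty_or_nonempty X with hX | hX
  · have h1 : transLen (g ^ n) = 0 := by
      unfold transLen
      rw [Set.range_eq_empty]
      exact Real.sInf_empty
    rw [h1]
    simpa using transLen_nonneg g
  · rcases Nat.eq_zero_or_pos n with hn | hn
    · subst hn
      simpa using transLen_nonneg g
    · have hnR : (0:ℝ) < n := by exact_mod_cast hn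
      have hlb : ∀ z ∈ Set.range (fun x : X => dist x (g x)), transLen (g ^ n) / n ≤ z := by
        rintro _ ⟨x, rfl⟩
        rw [div_le_iff₀ hnR]
        calc transLen (g ^ n) ≤ dist x ((g ^ n) x) := transLen_le _ x
          _ ≤ n * dist x (g x) := dist_pow_le g x n
          _ = dist x (g x) * n := by ring
      exact le_csInf (Set.range_nonempty _) hlb

universe u

/-- There is a universal constant `C > 0` such that for every `δ ≥ 0`, every
geodesic `δ`-hyperbolic space `X`, every isometry `g` of `X`, and every `m ≥ 1`,
`L(g^m) ≥ m (L(g) − Cδ)`; in particular `L(g) − Cδ ≤ ℓ(g) ≤ L(g)`. -/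
theorem exists_const_transLen_pow_ge :
    ∃ C : ℝ, 0 < C ∧ ∀ (δ : ℝ), 0 ≤ δ → ∀ (X : Type u) [MetricSpace X],
      GeodesicSpace X → GromovHyperbolic X δ → ∀ g : X ≃ᵢ X,
        (∀ m : ℕ, 1 ≤ m → transLen (g ^ m) ≥ m * (transLen g - C * δ)) ∧
        transLen g - C * δ ≤ asympTransLen g ∧ asympTransLen g ≤ transLen g := by
  refine ⟨10, by norm_num, ?_⟩
  intro δ hδ X _ geo hyp g
  have hL0 : 0 ≤ transLen g := transLen_nonneg g
  have key : ∀ m : ℕ, (m : ℝ) * (transLen g - 10 * δ) ≤ transLen (g ^ m) := by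
    intro m
    by_cases hcase : transLen g ≤ 10 * δ
    · have h1 : (m : ℝ) * (transLen g - 10 * δ) ≤ 0 :=
        mul_nonpos_of_nonneg_of_nonpos (Nat.cast_nonneg m) (by linarith)
      exact le_trans h1 (transLen_nonneg _)
    · push_neg at hcase
      have hne : Nonempty X := by
        by_contra h
        have hX : IsEmpty X := not_nonempty_iff.mp h
        have h0 : transLen g = 0 := by
          unfold transLen; rw [Set.range_eq_empty]; exact Real.sInf_empty
        rw [h0] at hcase
        linarith
      apply le_csInf (Set.range_nonempty _)
      rintro _ ⟨x, rfl⟩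
      exact chain hδ geo hyp g hcase x m
  have hbdd : Filter.IsBoundedUnder (· ≤ ·) Filter.atTop
      (fun n : ℕ => transLen (g ^ n) / n) :=
    Filter.isBoundedUnder_of ⟨transLen g, fun n => transLen_pow_div_le g n⟩
  refine ⟨fun m _ => key m, ?_, ?_⟩
  · by_cases hcase : transLen g ≤ 10 * δ
    · have h0 : (0:ℝ) ≤ asympTransLen g := by
        unfold asympTransLen
        apply Filter.le_limsup_of_frequently_le _ hbdd
        exact Filter.Frequently.of_forall
          (fun n => div_nonneg (transLen_nonneg _) (Nat.cast_nonneg n))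
      linarith
    · push_neg at hcase
      unfold asympTransLen
      apply Filter.le_limsup_of_frequently_le _ hbdd
      apply Filter.Eventually.frequently
      filter_upwards [Filter.eventually_ge_atTop 1] with m hm
      have hmR : (0:ℝ) < m := by exact_mod_cast hm
      rw [le_div_iff₀ hmR]
      calc (transLen g - 10*δ) * m = m * (transLen g - 10*δ) := by ring
        _ ≤ transLen (g ^ m) := key m
  · unfold asympTransLen
    apply Filter.limsup_le_of_le
    · exact Filter.IsBoundedUnder.isCoboundedUnder_le
        (Filter.isBoundedUnder_of
          ⟨0, fun n => div_nonneg (transLen_nonneg _) (Nat.cast_nonneg n)⟩)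
    · exact Filter.Eventually.of_forall (fun n => transLen_pow_div_le g n)
end

section
/- (Geometric Bochi-type inequality for hyperbolic spaces.) There is an absolute constant K > 0 with the following property: for every δ ≥ 0, every geodesic δ-hyperbolic metric space X, and every finite set S ⊆ Isom(X), one has L(S) − K·δ ≤ λ₂(S) = max_{a,b ∈ S} { ℓ(a), ℓ(ab)/2 } ≤ L(S). -/
open Pointwise Filter

universe u

/-!
The upper bound holds in every metric space: `ℓ(g) ≤ d(x, gx)`, so `ℓ(s) ≤ L(S, x)` and
`ℓ(ab) ≤ 2 L(S, x)` for `a, b ∈ S`.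

For the lower bound, thin triangles give Gromov's four-point condition with constant `3δ`, and
then `ℓ(g) ≥ d(x, gx) - 2 (g⁻¹x|gx)_x - 2δ`, because the orbit of `x` is a local quasi-geodesic.
Let `x` nearly minimise `L(S, ·)` and let `a ∈ S` displace `x` the most. If every `b ∈ S`
displacing `x` almost as much has `(ax|bx)_x ≥ t`, moving `x` by `t` towards `ax` lowers every
displacement by about `t`, contradicting the choice of `x`. Otherwise some such `b` has
`(ax|bx)_x < t`, so `a` and `b` play ping-pong and `ℓ(ab) ≥ 2 L(S) - O(t + δ)`. Taking `t` a tenth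
of `L(S) - λ₂(S)`, both cases are impossible once `L(S) - λ₂(S) > 80 · 3δ`.
-/

noncomputable def gromovProd {X : Type*} [MetricSpace X] (w a b : X) : ℝ :=
  (dist w a + dist w b - dist a b) / 2

/-- Gromov's four-point condition, the Gromov-product form of `δ`-hyperbolicity. -/
def GromovFourPoint (X : Type*) [MetricSpace X] (δ : ℝ) : Prop :=
  ∀ w p q r : X, min (gromovProd w p q) (gromovProd w q r) - δ ≤ gromovProd w p r

section Hyperbolicity

variable {X : Type*} [MetricSpace X]

lemma gromovProd_nonneg (w a b : X) : 0 ≤ gromovProd w a b := by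
  unfold gromovProd; linarith [dist_triangle_left a b w]

lemma gromovProd_comm (w a b : X) : gromovProd w a b = gromovProd w b a := by
  unfold gromovProd; rw [dist_comm a b, add_comm (dist w a)]

lemma gromovProd_le_dist_right (w a b : X) : gromovProd w a b ≤ dist w b := by
  unfold gromovProd; linarith [dist_triangle_right w a b]

@[simp]
lemma gromovProd_self_left (w b : X) : gromovProd w w b = 0 := by
  simp [gromovProd]

lemma gromovProd_apply (g : X ≃ᵢ X) (w a b : X) :
    gromovProd (g w) (g a) (g b) = gromovProd w a b := by
  simp only [gromovProd, g.dist_eq]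

lemma gromovProd_add_gromovProd (w a b : X) : gromovProd w a b + gromovProd a w b = dist w a := by
  unfold gromovProd; linarith [dist_comm a w]

lemma gromovProd_le_dist_of_dist_add_dist_eq {w a b p : X}
    (hp : dist a p + dist p b = dist a b) : gromovProd w a b ≤ dist w p := by
  unfold gromovProd; linarith [dist_triangle w p a, dist_triangle w p b, dist_comm p a]

namespace IsGeodesicSegment

variable {s : Set X} {a b : X}

lemma symm (h : IsGeodesicSegment s a b) : IsGeodesicSegment s b a := by
  obtain ⟨f, h0, h1, hiso, rfl⟩ := h
  have hmem : ∀ u ∈ Set.Icc (0 : ℝ) (dist a b), dist a b - u ∈ Set.Icc (0 : ℝ) (dist a b) :=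
    fun u hu => ⟨by linarith [hu.2], by linarith [hu.1]⟩
  refine ⟨fun u => f (dist a b - u), by simpa [dist_comm] using h1, by simp [dist_comm, h0],
    fun u hu v hv => ?_, ?_⟩
  · rw [dist_comm b a] at hu hv
    rw [hiso _ (hmem u hu) _ (hmem v hv), abs_sub_comm]
    ring_nf
  · rw [dist_comm b a]
    ext p
    constructor
    · rintro ⟨u, hu, rfl⟩
      exact ⟨dist a b - u, hmem u hu, by simp⟩
    · rintro ⟨u, hu, rfl⟩
      exact ⟨dist a b - u, hmem u hu, rfl⟩

lemma dist_add_dist_eq (h : IsGeodesicSegment s a b) {p : X} (hp : p ∈ s) :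
    dist a p + dist p b = dist a b := by
  obtain ⟨f, h0, h1, hiso, rfl⟩ := h
  obtain ⟨u, hu, rfl⟩ := hp
  have hab : (0 : ℝ) ≤ dist a b := dist_nonneg
  have e0 := hiso 0 ⟨le_rfl, hab⟩ u hu
  have e1 := hiso u hu (dist a b) ⟨hab, le_rfl⟩
  rw [h0] at e0
  rw [h1] at e1
  rw [e0, e1, abs_of_nonpos (by linarith [hu.1]), abs_of_nonpos (by linarith [hu.2])]
  ring

lemma exists_dist_eq (h : IsGeodesicSegment s a b) {t : ℝ} (ht : t ∈ Set.Icc 0 (dist a b)) :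
    ∃ p ∈ s, dist a p = t ∧ dist p b = dist a b - t := by
  obtain ⟨f, h0, h1, hiso, rfl⟩ := h
  have hab : (0 : ℝ) ≤ dist a b := dist_nonneg
  have e0 := hiso 0 ⟨le_rfl, hab⟩ t ht
  have e1 := hiso t ht (dist a b) ⟨hab, le_rfl⟩
  rw [h0] at e0
  rw [h1] at e1
  refine ⟨f t, ⟨t, ht, rfl⟩, ?_, ?_⟩
  · rw [e0, abs_of_nonpos (by linarith [ht.1])]; ring
  · rw [e1, abs_of_nonpos (by linarith [ht.2])]; ring

end IsGeodesicSegment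

namespace GromovHyperbolic

variable {δ : ℝ} (hX : GromovHyperbolic X δ) (hgeo : GeodesicSpace X) {p r : X} {s : Set X}
include hX hgeo

lemma min_gromovProd_sub_le_dist (hs : IsGeodesicSegment s p r)
    {m : X} (hm : m ∈ s) (w q : X) :
    min (gromovProd w p q) (gromovProd w q r) - δ ≤ dist w m := by
  obtain ⟨spq, hpq⟩ := hgeo p q
  obtain ⟨sqr, hqr⟩ := hgeo q r
  obtain ⟨v, hv, hmv⟩ := (hX p q r spq sqr s hpq hqr hs.symm).2.2 m hm
  have hwv : dist w v ≤ dist w m + δ := by linarith [dist_triangle w m v]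
  rcases hv with hv | hv
  · linarith [gromovProd_le_dist_of_dist_add_dist_eq (w := w) (hpq.dist_add_dist_eq hv),
      min_le_left (gromovProd w p q) (gromovProd w q r)]
  · linarith [gromovProd_le_dist_of_dist_add_dist_eq (w := w) (hqr.dist_add_dist_eq hv),
      min_le_right (gromovProd w p q) (gromovProd w q r)]

/-- The witness is the point of `[p, r]` at distance `(w|r)_p` from `p`. -/
lemma exists_dist_le_gromovProd_add (hs : IsGeodesicSegment s p r)
    (w : X) : ∃ m ∈ s, dist w m ≤ gromovProd w p r + 2 * δ := by
  obtain ⟨srw, hrw⟩ := hgeo r w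
  obtain ⟨swp, hwp⟩ := hgeo w p
  obtain ⟨m, hm, hpm, hmr⟩ := hs.exists_dist_eq
    ⟨gromovProd_nonneg p w r, gromovProd_le_dist_right p w r⟩
  refine ⟨m, hm, ?_⟩
  obtain ⟨v, hv, hmv⟩ := (hX p r w s srw swp hs hrw hwp).1 m hm
  have hwm : dist w m ≤ dist w v + δ := by linarith [dist_triangle w v m, dist_comm v m]
  unfold gromovProd at hpm hmr ⊢
  rcases hv with hv | hv
  · have hrv := hrw.dist_add_dist_eq hv
    linarith [dist_triangle r v m, dist_comm v m, dist_comm m r, dist_comm v w, dist_comm w r,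
      dist_comm w p, dist_comm p r]
  · have hwv := hwp.dist_add_dist_eq hv
    linarith [dist_triangle p v m, dist_comm v m, dist_comm v p, dist_comm w p]

theorem gromovFourPoint : GromovFourPoint X (3 * δ) := by
  intro w p q r
  obtain ⟨s, hs⟩ := hgeo p r
  obtain ⟨m, hm, hwm⟩ := hX.exists_dist_le_gromovProd_add hgeo hs w
  linarith [hX.min_gromovProd_sub_le_dist hgeo hs hm w q]

end GromovHyperbolic

end Hyperbolicity

section Displacement

variable {X : Type*} [MetricSpace X]

lemma pow_apply_apply (g : X ≃ᵢ X) (n : ℕ) (x : X) : (g ^ n) (g x) = (g ^ (n + 1)) x := by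
  rw [← IsometryEquiv.mul_apply, ← pow_succ]

lemma pow_succ_apply_inv_apply (g : X ≃ᵢ X) (n : ℕ) (x : X) :
    (g ^ (n + 1)) (g⁻¹ x) = (g ^ n) x := by
  rw [← IsometryEquiv.mul_apply, pow_succ, mul_inv_cancel_right]

lemma dist_inv_apply (g : X ≃ᵢ X) (x : X) : dist x (g⁻¹ x) = dist x (g x) := by
  rw [← g.dist_eq, IsometryEquiv.apply_inv_self, dist_comm]

lemma dist_pow_apply_le (g : X ≃ᵢ X) (x : X) (n : ℕ) : dist x ((g ^ n) x) ≤ n * dist x (g x) := by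
  induction n with
  | zero => simp
  | succ n ih =>
    rw [← pow_apply_apply, Nat.cast_succ]
    linarith [dist_triangle x ((g ^ n) x) ((g ^ n) (g x)), (g ^ n).dist_eq x (g x)]

lemma dist_apply_le_two_mul_dist_add (g : X ≃ᵢ X) (x y : X) :
    dist x (g x) ≤ 2 * dist x y + dist y (g y) := by
  linarith [dist_triangle4 x y (g y) (g x), g.dist_eq y x, dist_comm y x]

/-- Compare the orbits of `x` and `y` under the iterates `(gⁿ)ᵏ` and let `k → ∞`. -/
lemma mul_le_dist_pow_apply_of_forall {g : X ≃ᵢ X} {x : X} {c : ℝ}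
    (h : ∀ n : ℕ, n * c ≤ dist x ((g ^ n) x)) (n : ℕ) (y : X) :
    n * c ≤ dist y ((g ^ n) y) := by
  by_contra! hlt
  obtain ⟨k, hk⟩ := exists_nat_gt (2 * dist x y / (n * c - dist y ((g ^ n) y)))
  rw [div_lt_iff₀ (by linarith)] at hk
  have hnk := h (n * k)
  have hy := dist_pow_apply_le (g ^ n) y k
  rw [← pow_mul] at hy
  push_cast at hnk
  linarith [dist_apply_le_two_mul_dist_add (g ^ (n * k)) x y]

lemma jointDispAt_nonneg (S : Set (X ≃ᵢ X)) (x : X) : 0 ≤ jointDispAt S x :=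
  Real.sSup_nonneg (by rintro _ ⟨s, -, rfl⟩; exact dist_nonneg)

lemma jointMinDisp_nonneg (S : Set (X ≃ᵢ X)) : 0 ≤ jointMinDisp S :=
  Real.sInf_nonneg (by rintro _ ⟨x, rfl⟩; exact jointDispAt_nonneg S x)

lemma jointMinDisp_le_jointDispAt (S : Set (X ≃ᵢ X)) (x : X) : jointMinDisp S ≤ jointDispAt S x :=
  csInf_le ⟨0, by rintro _ ⟨y, rfl⟩; exact jointDispAt_nonneg S y⟩ ⟨x, rfl⟩

lemma jointMinDisp_of_isEmpty [IsEmpty X] (S : Set (X ≃ᵢ X)) : jointMinDisp S = 0 := by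
  rw [jointMinDisp, Set.range_eq_empty, Real.sInf_empty]

lemma asympDisp_of_isEmpty [IsEmpty X] (S : Set (X ≃ᵢ X)) : asympDisp S = 0 := by
  simp [asympDisp, jointMinDisp_of_isEmpty]

lemma jointDispAt_singleton (g : X ≃ᵢ X) (x : X) : jointDispAt {g} x = dist x (g x) := by
  simp [jointDispAt]

lemma jointMinDisp_singleton_pow (g : X ≃ᵢ X) (n : ℕ) :
    jointMinDisp ({g} ^ n) = ⨅ x, dist x ((g ^ n) x) := by
  rw [Set.singleton_pow]
  exact congr_arg iInf (funext (jointDispAt_singleton (g ^ n)))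

lemma jointMinDisp_singleton_pow_div_le (g : X ≃ᵢ X) (x : X) (n : ℕ) :
    jointMinDisp ({g} ^ n) / n ≤ dist x (g x) := by
  rcases Nat.eq_zero_or_pos n with rfl | hn
  · simp
  rw [div_le_iff₀ (by positivity), jointMinDisp_singleton_pow, mul_comm]
  exact (ciInf_le ⟨0, by rintro _ ⟨y, rfl⟩; exact dist_nonneg⟩ x).trans (dist_pow_apply_le g x n)

lemma asympDisp_singleton_le_dist (g : X ≃ᵢ X) (x : X) : asympDisp {g} ≤ dist x (g x) :=
  limsup_le_of_le
    (isCoboundedUnder_le_of_le atTop fun n => div_nonneg (jointMinDisp_nonneg _) n.cast_nonneg)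
    (Eventually.of_forall (jointMinDisp_singleton_pow_div_le g x))

lemma le_asympDisp_singleton {g : X ≃ᵢ X} {c : ℝ} (x : X)
    (h : ∀ n : ℕ, n * c ≤ dist x ((g ^ n) x)) : c ≤ asympDisp {g} := by
  have : Nonempty X := ⟨x⟩
  refine le_limsup_of_frequently_le ((eventually_gt_atTop 0).mono fun n hn => ?_).frequently
    (isBoundedUnder_of ⟨dist x (g x), jointMinDisp_singleton_pow_div_le g x⟩)
  rw [le_div_iff₀ (by exact_mod_cast hn), jointMinDisp_singleton_pow, mul_comm]
  exact le_ciInf (mul_le_dist_pow_apply_of_forall h n)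

lemma asympDisp_singleton_nonneg (g : X ≃ᵢ X) : 0 ≤ asympDisp {g} := by
  rcases isEmpty_or_nonempty X with hX | ⟨⟨x⟩⟩
  · rw [asympDisp_of_isEmpty]
  · exact le_asympDisp_singleton x fun n => by simp

end Displacement

section JointDisplacement

variable {X : Type*} [MetricSpace X] {S : Set (X ≃ᵢ X)}

lemma dist_le_jointDispAt (hS : S.Finite) {s : X ≃ᵢ X} (hs : s ∈ S) (x : X) :
    dist x (s x) ≤ jointDispAt S x :=
  le_csSup (hS.image _).bddAbove ⟨s, hs, rfl⟩

lemma jointDispAt_le (hne : S.Nonempty) {x : X} {c : ℝ} (h : ∀ s ∈ S, dist x (s x) ≤ c) :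
    jointDispAt S x ≤ c :=
  csSup_le (hne.image _) (by rintro _ ⟨s, hs, rfl⟩; exact h s hs)

lemma exists_dist_eq_jointDispAt (hS : S.Finite) (hne : S.Nonempty) (x : X) :
    ∃ a ∈ S, dist x (a x) = jointDispAt S x :=
  (hne.image _).csSup_mem (hS.image _)

lemma dist_apply_le_mul_jointDispAt (hS : S.Finite) {n : ℕ} {g : X ≃ᵢ X} (hg : g ∈ S ^ n)
    (x : X) : dist x (g x) ≤ n * jointDispAt S x := by
  induction n generalizing g with
  | zero =>
    rw [pow_zero, Set.mem_one] at hg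
    simp [hg]
  | succ n ih =>
    obtain ⟨h, hh, s, hs, rfl⟩ := (pow_succ S n ▸ hg : g ∈ S ^ n * S)
    rw [IsometryEquiv.mul_apply, Nat.cast_succ]
    linarith [dist_triangle x (h x) (h (s x)), h.dist_eq x (s x), ih hh,
      dist_le_jointDispAt hS hs x]

lemma asympDisp_singleton_le_mul_jointMinDisp (hS : S.Finite) {n : ℕ} {g : X ≃ᵢ X}
    (hg : g ∈ S ^ n) : asympDisp {g} ≤ n * jointMinDisp S := by
  rcases isEmpty_or_nonempty X with hX | hX
  · simp [asympDisp_of_isEmpty, jointMinDisp_of_isEmpty]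
  · change _ ≤ n * ⨅ x, jointDispAt S x
    rw [Real.mul_iInf_of_nonneg n.cast_nonneg]
    exact le_ciInf fun x =>
      (asympDisp_singleton_le_dist g x).trans (dist_apply_le_mul_jointDispAt hS hg x)

lemma asympDisp_singleton_le_lamD (hS : S.Finite) {s : X ≃ᵢ X} (hs : s ∈ S) :
    asympDisp {s} ≤ lamD S :=
  le_csSup (hS.image _).bddAbove ⟨s, hs, rfl⟩

lemma asympDisp_mul_le_lamD_sq (hS : S.Finite) {a b : X ≃ᵢ X} (ha : a ∈ S) (hb : b ∈ S) :
    asympDisp {a * b} ≤ lamD (S ^ 2) := by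
  rw [pow_two]
  exact asympDisp_singleton_le_lamD (hS.mul hS) (Set.mul_mem_mul ha hb)

lemma lamD_pow_le_mul_jointMinDisp (hS : S.Finite) (hne : S.Nonempty) (n : ℕ) :
    lamD (S ^ n) ≤ n * jointMinDisp S :=
  csSup_le (hne.pow.image _) fun _ ⟨_, hg, h⟩ => h ▸ asympDisp_singleton_le_mul_jointMinDisp hS hg

end JointDisplacement

lemma max_sSup_image_eq_sSup_image_prod {M : Type*} [Mul M] {S : Set M} (hS : S.Finite)
    (hne : S.Nonempty) (f g : M → ℝ) :
    max (sSup (f '' S)) (sSup (g '' (S * S)) / 2) =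
      sSup ((fun p : M × M => max (f p.1) (g (p.1 * p.2) / 2)) '' S ×ˢ S) := by
  have hP := ((hS.prod hS).image fun p : M × M => max (f p.1) (g (p.1 * p.2) / 2)).bddAbove
  obtain ⟨s₀, hs₀⟩ := id hne
  apply le_antisymm
  · refine max_le (csSup_le (hne.image f) ?_) ?_
    · rintro _ ⟨s, hs, rfl⟩
      exact (le_max_left _ _).trans (le_csSup hP ⟨(s, s₀), ⟨hs, hs₀⟩, rfl⟩)
    · rw [div_le_iff₀ two_pos]
      refine csSup_le ((hne.mul hne).image g) ?_
      rintro _ ⟨_, ⟨a, ha, b, hb, rfl⟩, rfl⟩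
      linarith [(le_max_right _ _).trans (le_csSup hP ⟨(a, b), ⟨ha, hb⟩, rfl⟩)]
  · refine csSup_le ((hne.prod hne).image _) ?_
    rintro _ ⟨⟨a, b⟩, ⟨ha, hb⟩, rfl⟩
    exact max_le_max (le_csSup (hS.image f).bddAbove ⟨a, ha, rfl⟩)
      (div_le_div_of_nonneg_right
        (le_csSup ((hS.mul hS).image g).bddAbove ⟨a * b, Set.mul_mem_mul ha hb, rfl⟩) two_pos.le)

namespace GromovFourPoint

variable {X : Type*} [MetricSpace X] {δ : ℝ}

lemma nonneg (hX : GromovFourPoint X δ) (x : X) : 0 ≤ δ := by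
  simpa [gromovProd] using hX x x x x

lemma le_gromovProd (hX : GromovFourPoint X δ) {w p q r : X} {c : ℝ}
    (hpq : c + δ ≤ gromovProd w p q) (hqr : c + δ ≤ gromovProd w q r) : c ≤ gromovProd w p r := by
  linarith [hX w p q r, le_min hpq hqr]

/-- Along the orbit `xₙ = gⁿ x`, the Gromov products `(x|xₙ₊₁)_{xₙ}` stay below `ρ + δ`, where
`ρ = (g⁻¹x|gx)_x = (xₙ|xₙ₊₂)_{xₙ₊₁}`: the orbit is a local quasi-geodesic. -/
lemma gromovProd_pow_apply_le (hX : GromovFourPoint X δ) (g : X ≃ᵢ X) (x : X)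
    (hg : 2 * gromovProd x (g⁻¹ x) (g x) + 2 * δ < dist x (g x)) (n : ℕ) :
    gromovProd ((g ^ n) x) x ((g ^ (n + 1)) x) ≤ gromovProd x (g⁻¹ x) (g x) + δ := by
  set ρ := gromovProd x (g⁻¹ x) (g x)
  induction n with
  | zero => simpa using add_nonneg (gromovProd_nonneg x (g⁻¹ x) (g x)) (hX.nonneg x)
  | succ n ih =>
    have hρ : gromovProd ((g ^ (n + 1)) x) ((g ^ n) x) ((g ^ (n + 2)) x) = ρ := by
      have h := gromovProd_apply (g ^ (n + 1)) x (g⁻¹ x) (g x)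
      rwa [pow_succ_apply_inv_apply, pow_apply_apply] at h
    have hback : dist x (g x) - ρ - δ ≤ gromovProd ((g ^ (n + 1)) x) ((g ^ n) x) x := by
      have hd : dist ((g ^ (n + 1)) x) ((g ^ n) x) = dist x (g x) := by
        rw [← pow_apply_apply, dist_comm, (g ^ n).dist_eq]
      linarith [gromovProd_add_gromovProd ((g ^ (n + 1)) x) ((g ^ n) x) x,
        gromovProd_comm ((g ^ n) x) ((g ^ (n + 1)) x) x]
    have h4 := hX ((g ^ (n + 1)) x) ((g ^ n) x) x ((g ^ (n + 2)) x)
    rcases min_le_iff.1 (show _ ≤ ρ + δ by linarith) with h | h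
    · linarith
    · exact h

lemma mul_le_dist_pow_apply (hX : GromovFourPoint X δ) (g : X ≃ᵢ X) (x : X)
    (hg : 2 * gromovProd x (g⁻¹ x) (g x) + 2 * δ < dist x (g x)) (n : ℕ) :
    n * (dist x (g x) - 2 * gromovProd x (g⁻¹ x) (g x) - 2 * δ) ≤ dist x ((g ^ n) x) := by
  induction n with
  | zero => simp
  | succ n ih =>
    have h := hX.gromovProd_pow_apply_le g x hg n
    have hdef : gromovProd ((g ^ n) x) x ((g ^ (n + 1)) x) = (dist ((g ^ n) x) x +
        dist ((g ^ n) x) ((g ^ (n + 1)) x) - dist x ((g ^ (n + 1)) x)) / 2 := rfl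
    have hd : dist ((g ^ n) x) ((g ^ (n + 1)) x) = dist x (g x) := by
      rw [← pow_apply_apply, (g ^ n).dist_eq]
    push_cast
    linarith [dist_comm ((g ^ n) x) x]

theorem dist_sub_two_mul_gromovProd_le_asympDisp (hX : GromovFourPoint X δ)
    (g : X ≃ᵢ X) (x : X) :
    dist x (g x) - 2 * gromovProd x (g⁻¹ x) (g x) - 2 * δ ≤ asympDisp {g} := by
  by_cases hg : 2 * gromovProd x (g⁻¹ x) (g x) + 2 * δ < dist x (g x)
  · exact le_asympDisp_singleton x (hX.mul_le_dist_pow_apply g x hg)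
  · linarith [asympDisp_singleton_nonneg g]

/-- The hypotheses put `y` near the geodesic `[x, bx]` and `by` near `[bx, b²x]`, so the
Gromov product `(y|by)_{bx}` is about `t`. -/
lemma dist_apply_le_of_le_gromovProd (hX : GromovFourPoint X δ) {b : X ≃ᵢ X} {x y z : X}
    {t : ℝ} (hxy : dist x y = t) (hyz : dist y z = dist x z - t)
    (hz : t ≤ gromovProd x z (b x)) (hb : t ≤ gromovProd x (b⁻¹ x) (b x))
    (hbx : 2 * t ≤ dist x (b x)) :
    dist y (b y) ≤ dist x (b x) - 2 * t + 8 * δ := by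
  have hyz' : gromovProd x y z = t := by
    unfold gromovProd; rw [hxy, hyz]; ring
  have hy : t - δ ≤ gromovProd x y (b x) := hX.le_gromovProd (by linarith) (by linarith)
  have hb' : gromovProd (b x) x (b (b x)) = gromovProd x (b⁻¹ x) (b x) := by
    simpa using gromovProd_apply b x (b⁻¹ x) (b x)
  have hby : gromovProd (b x) (b (b x)) (b y) = gromovProd x y (b x) := by
    rw [gromovProd_comm, gromovProd_apply]
  have hxby : t - 2 * δ ≤ gromovProd (b x) x (b y) :=
    hX.le_gromovProd (q := b (b x)) (by linarith [hX.nonneg x]) (by linarith)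
  have hyx : dist x (b x) - t ≤ gromovProd (b x) y x := by
    unfold gromovProd
    linarith [dist_triangle x y (b x), dist_comm (b x) y, dist_comm (b x) x, dist_comm y x]
  have hyby : t - 3 * δ ≤ gromovProd (b x) y (b y) :=
    hX.le_gromovProd (q := x) (by linarith [hX.nonneg x]) (by linarith)
  have hdef : gromovProd x y (b x) = (dist x y + dist x (b x) - dist y (b x)) / 2 := rfl
  unfold gromovProd at hyby
  linarith [b.dist_eq x y, dist_comm (b x) y]

/-- Ping-pong: the chain `ax, (ab)⁻¹x, b⁻¹x, bx` of four-point inequalities shows that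
`(abx | (ab)⁻¹x)_x` is small as soon as `(ax | bx)_x` is. -/
theorem lt_asympDisp_mul (hX : GromovFourPoint X δ) {a b : X ≃ᵢ X} {x : X} {t : ℝ}
    (hab : gromovProd x (a x) (b x) < t) (ha : t + δ ≤ gromovProd x (a⁻¹ x) (a x))
    (hb : t + δ ≤ gromovProd x (b⁻¹ x) (b x)) (hbx : 2 * t + 4 * δ ≤ dist x (b x))
    (hba : dist x (b x) ≤ dist x (a x)) :
    dist x (a x) + dist x (b x) - 4 * t - 10 * δ < asympDisp {a * b} := by
  have hδ := hX.nonneg x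
  have hinv : gromovProd x (a⁻¹ x) (b x) < t + δ := by
    by_contra! h
    linarith [hX.le_gromovProd (p := a x) (by rwa [gromovProd_comm]) h]
  have hD : dist x (a x) + dist x (b x) - 2 * t - 2 * δ < dist x ((a * b) x) := by
    have hdist : dist x ((a * b) x) = dist (a⁻¹ x) (b x) := by
      rw [IsometryEquiv.mul_apply, ← a.dist_eq (a⁻¹ x), IsometryEquiv.apply_inv_self]
    have hdef : gromovProd x (a⁻¹ x) (b x) =
        (dist x (a x) + dist x (b x) - dist x ((a * b) x)) / 2 := by
      rw [gromovProd, dist_inv_apply, hdist]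
    linarith
  have hfwd : t + 3 * δ ≤ gromovProd x (a x) ((a * b) x) := by
    have : dist (a x) ((a * b) x) = dist x (b x) := a.dist_eq x (b x)
    unfold gromovProd
    linarith
  have hbwd : t + 2 * δ ≤ gromovProd x ((a * b)⁻¹ x) (b⁻¹ x) := by
    have : dist ((a * b)⁻¹ x) (b⁻¹ x) = dist x (a x) := by
      rw [← b.dist_eq, IsometryEquiv.apply_inv_self, ← IsometryEquiv.mul_apply, mul_inv_rev,
        mul_inv_cancel_left, dist_comm, dist_inv_apply]
    unfold gromovProd
    rw [dist_inv_apply, dist_inv_apply, this]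
    linarith
  have hm : gromovProd x ((a * b)⁻¹ x) ((a * b) x) < t + 3 * δ := by
    by_contra! h
    have h₁ : t + 2 * δ ≤ gromovProd x (a x) ((a * b)⁻¹ x) :=
      hX.le_gromovProd (by linarith) (by rw [gromovProd_comm]; linarith)
    have h₂ : t + δ ≤ gromovProd x (a x) (b⁻¹ x) := hX.le_gromovProd (by linarith) (by linarith)
    linarith [hX.le_gromovProd h₂ hb]
  linarith [hX.dist_sub_two_mul_gromovProd_le_asympDisp (a * b) x]

/-- Let `a ∈ S` displace `x` the most. Either every `b ∈ S` displacing `x` almost as much moves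
`x` towards `ax`, and then so does moving `x` towards `ax`, or `lt_asympDisp_mul` applies to `a`
and some such `b`, contradicting `ℓ(ab) ≤ 2 lam`. -/
theorem exists_jointDispAt_le (hX : GromovFourPoint X δ) (hgeo : GeodesicSpace X)
    {S : Set (X ≃ᵢ X)} (hS : S.Finite) (hne : S.Nonempty) {lam t : ℝ}
    (hℓ : ∀ s ∈ S, asympDisp {s} ≤ lam) (hℓ₂ : ∀ a ∈ S, ∀ b ∈ S, asympDisp {a * b} ≤ 2 * lam)
    (ht : 8 * δ < t) {x : X} (hx : lam + 10 * t ≤ jointDispAt S x) :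
    ∃ y, jointDispAt S y ≤ jointDispAt S x - t + 8 * δ := by
  set D := jointDispAt S x
  have hδ := hX.nonneg x
  obtain ⟨a, ha, hDa⟩ := exists_dist_eq_jointDispAt hS hne x
  have hD : ∀ s ∈ S, dist x (s x) ≤ D := fun s hs => dist_le_jointDispAt hS hs x
  have hlam : 0 ≤ lam := (asympDisp_singleton_nonneg a).trans (hℓ a ha)
  have hgp : ∀ s ∈ S, dist x (s x) - lam - 2 * δ ≤ 2 * gromovProd x (s⁻¹ x) (s x) :=
    fun s hs => by linarith [hX.dist_sub_two_mul_gromovProd_le_asympDisp s x, hℓ s hs]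
  by_cases hdir : ∀ b ∈ S, D - 3 * t ≤ dist x (b x) → t ≤ gromovProd x (a x) (b x)
  · obtain ⟨seg, hseg⟩ := hgeo x (a x)
    obtain ⟨y, -, hxy, hya⟩ := hseg.exists_dist_eq (t := t) ⟨by linarith, by linarith⟩
    refine ⟨y, jointDispAt_le hne fun s hs => ?_⟩
    by_cases hs' : D - 3 * t ≤ dist x (s x)
    · linarith [hX.dist_apply_le_of_le_gromovProd hxy hya (hdir s hs hs')
        (by linarith [hgp s hs]) (by linarith), hD s hs]
    · linarith [dist_apply_le_two_mul_dist_add s y x, dist_comm y x]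
  · push Not at hdir
    obtain ⟨b, hb, hbx, hab⟩ := hdir
    have := hX.lt_asympDisp_mul hab (by linarith [hgp a ha]) (by linarith [hgp b hb])
      (by linarith) (hDa ▸ hD b hb)
    linarith [hℓ₂ a ha b hb]

theorem jointMinDisp_le (hX : GromovFourPoint X δ) (hδ : 0 ≤ δ) (hgeo : GeodesicSpace X)
    {S : Set (X ≃ᵢ X)} (hS : S.Finite) (hne : S.Nonempty) {lam : ℝ}
    (hℓ : ∀ s ∈ S, asympDisp {s} ≤ lam) (hℓ₂ : ∀ a ∈ S, ∀ b ∈ S, asympDisp {a * b} ≤ 2 * lam) :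
    jointMinDisp S ≤ lam + 80 * δ := by
  obtain ⟨s, hs⟩ := id hne
  rcases isEmpty_or_nonempty X with hXe | hXn
  · rw [jointMinDisp_of_isEmpty]
    linarith [hℓ s hs, asympDisp_singleton_nonneg s]
  by_contra! h
  set t := (jointMinDisp S - lam) / 10 with ht
  obtain ⟨x, hx⟩ : ∃ x, jointDispAt S x < jointMinDisp S + (t - 8 * δ) :=
    exists_lt_of_ciInf_lt (show jointMinDisp S < _ by linarith)
  obtain ⟨y, hy⟩ := hX.exists_jointDispAt_le hgeo hS hne hℓ hℓ₂ (t := t) (by linarith)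
    (x := x) (by linarith [jointMinDisp_le_jointDispAt S x])
  linarith [jointMinDisp_le_jointDispAt S y]

end GromovFourPoint

/-- geometric Bochi-type inequality for hyperbolic spaces. There is an
absolute constant `K > 0` such that for every `δ ≥ 0`, every geodesic `δ`-hyperbolic space `X`
and every finite set `S` of isometries of `X`,
`L(S) − Kδ ≤ λ₂(S) = max_{a,b ∈ S} {ℓ(a), ℓ(ab)/2} ≤ L(S)`. -/
theorem exists_const_bochi_hyperbolic :
    ∃ K : ℝ, 0 < K ∧ ∀ (δ : ℝ), 0 ≤ δ → ∀ (X : Type u) [MetricSpace X],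
      GeodesicSpace X → GromovHyperbolic X δ →
        ∀ S : Set (X ≃ᵢ X), S.Finite → S.Nonempty →
          jointMinDisp S - K * δ ≤ max (lamD S) (lamD (S ^ 2) / 2) ∧
          max (lamD S) (lamD (S ^ 2) / 2) =
            sSup ((fun p : (X ≃ᵢ X) × (X ≃ᵢ X) =>
              max (asympDisp {p.1}) (asympDisp {p.1 * p.2} / 2)) '' S ×ˢ S) ∧
          max (lamD S) (lamD (S ^ 2) / 2) ≤ jointMinDisp S := by
  refine ⟨240, by norm_num, fun δ hδ X _ hgeo hhyp S hS hne => ⟨?_, ?_, ?_⟩⟩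
  · have := (hhyp.gromovFourPoint hgeo).jointMinDisp_le (by positivity) hgeo hS hne
      (fun s hs => (asympDisp_singleton_le_lamD hS hs).trans (le_max_left _ _))
      (fun a ha b hb => by
        linarith [asympDisp_mul_le_lamD_sq hS ha hb, le_max_right (lamD S) (lamD (S ^ 2) / 2)])
    linarith
  · rw [pow_two]
    exact max_sSup_image_eq_sSup_image_prod hS hne (fun s => asympDisp {s}) fun s => asympDisp {s}
  · have h₁ := lamD_pow_le_mul_jointMinDisp hS hne 1
    have h₂ := lamD_pow_le_mul_jointMinDisp hS hne 2
    simp only [pow_one, Nat.cast_one, one_mul, Nat.cast_ofNat] at h₁ h₂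
    exact max_le h₁ (by linarith)
end

section
/- There is an absolute constant K > 0 with the following property: for every δ ≥ 0, every geodesic δ-hyperbolic metric space X, every finite set S ⊆ Isom(X), and every integer n ≥ 1, one has n·(L(S) − K·δ) ≤ λ₂(S^n) ≤ L(S^n). Moreover the geometric Berger–Wang identity holds: λ_∞(S) = ℓ(S). -/
open Pointwise Filter

namespace BochiBW

variable {X : Type*} [MetricSpace X]

/-- Gromov product of `u`, `v` at `w`. -/
noncomputable def gr (w u v : X) : ℝ := (dist w u + dist w v - dist u v) / 2

lemma gr_nonneg (w u v : X) : 0 ≤ gr w u v := by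
  have := dist_triangle u w v
  unfold gr
  rw [dist_comm w u] at *
  linarith

lemma gr_comm (w u v : X) : gr w u v = gr w v u := by
  unfold gr; rw [dist_comm u v]; ring

lemma gr_le_left (w u v : X) : gr w u v ≤ dist w u := by
  have := dist_triangle w u v
  unfold gr; rw [dist_comm u v] at *; linarith

lemma gr_le_right (w u v : X) : gr w u v ≤ dist w v := by
  rw [gr_comm]; exact gr_le_left w v u

lemma gr_self (w v : X) : gr w w v = 0 := by
  unfold gr; simp

lemma dist_eq_gr (w u v : X) : dist u v = dist w u + dist w v - 2 * gr w u v := by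
  unfold gr; ring

lemma gr_add (w u v : X) : gr w u v + gr u w v = dist w u := by
  unfold gr; rw [dist_comm u w, dist_comm u v]; ring

lemma gr_isom (g : X ≃ᵢ X) (w u v : X) : gr (g w) (g u) (g v) = gr w u v := by
  unfold gr; rw [g.dist_eq, g.dist_eq, g.dist_eq]

lemma geoSeg_dist_add {s : Set X} {a b : X} (h : IsGeodesicSegment s a b)
    {p : X} (hp : p ∈ s) : dist a p + dist p b = dist a b := by
  obtain ⟨f, hf0, hfd, hiso, hs⟩ := h
  rw [hs] at hp
  obtain ⟨t, ht, rfl⟩ := hp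
  have h0 : (0:ℝ) ∈ Set.Icc (0:ℝ) (dist a b) := ⟨le_refl _, dist_nonneg⟩
  have hd : (dist a b) ∈ Set.Icc (0:ℝ) (dist a b) := ⟨dist_nonneg, le_refl _⟩
  have h1 : dist a (f t) = t := by
    rw [← hf0]; rw [hiso 0 h0 t ht]; rw [abs_of_nonpos (by linarith [ht.1])]; linarith
  have h2 : dist (f t) b = dist a b - t := by
    conv_lhs => rw [← hfd]
    rw [hiso t ht _ hd]; rw [abs_of_nonpos (by linarith [ht.2])]; ring
  rw [h1, h2]; ring

lemma geoSeg_exists_point {s : Set X} {a b : X} (h : IsGeodesicSegment s a b)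
    {t : ℝ} (h0 : 0 ≤ t) (ht : t ≤ dist a b) :
    ∃ p ∈ s, dist a p = t ∧ dist p b = dist a b - t := by
  obtain ⟨f, hf0, hfd, hiso, hs⟩ := h
  have htt : t ∈ Set.Icc (0:ℝ) (dist a b) := ⟨h0, ht⟩
  refine ⟨f t, by rw [hs]; exact ⟨t, htt, rfl⟩, ?_, ?_⟩
  · rw [← hf0, hiso 0 ⟨le_refl _, dist_nonneg⟩ t htt, abs_of_nonpos (by linarith)]; linarith
  · conv_lhs => rw [← hfd]
    rw [hiso t htt _ ⟨dist_nonneg, le_refl _⟩, abs_of_nonpos (by linarith)]; ring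

/-- A point on a geodesic from `u` to `v` is at distance at least `gr w u v` from `w`. -/
lemma gr_le_dist_of_on_geodesic {w u v p : X} (hp : dist u p + dist p v = dist u v) :
    gr w u v ≤ dist w p := by
  have h2 : dist w u ≤ dist w p + dist p u := dist_triangle w p u
  have h3 : dist w v ≤ dist w p + dist p v := dist_triangle w p v
  unfold gr
  rw [dist_comm p u] at h2
  linarith

section Hyp

variable {δ : ℝ} (hδ : 0 ≤ δ) (hgeo : GeodesicSpace X) (hhyp : GromovHyperbolic X δ)

include hδ hgeo hhyp

/-- Projection: there's a point on any geodesic from `u` to `v` at distance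
at most `gr w u v + 2δ` from `w`. -/
lemma exists_proj (w u v : X) {s : Set X} (hs : IsGeodesicSegment s u v) :
    ∃ p ∈ s, dist w p ≤ gr w u v + 2*δ := by
  obtain ⟨svw, hsvw⟩ := hgeo v w
  obtain ⟨swu, hswu⟩ := hgeo w u
  obtain ⟨hthin, -, -⟩ := hhyp u v w s svw swu hs hsvw hswu
  have htg : 0 ≤ gr u w v := gr_nonneg u w v
  have htl : gr u w v ≤ dist u v := gr_le_right u w v
  obtain ⟨p, hps, hap, hpb⟩ := geoSeg_exists_point hs htg htl
  obtain ⟨q, hq, hpq⟩ := hthin p hps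
  refine ⟨p, hps, ?_⟩
  rcases hq with hq | hq
  · -- q on segment from v to w
    have hsum := geoSeg_dist_add hsvw hq
    have h1 : dist v p ≤ dist v q + dist q p := dist_triangle v q p
    have h2 : dist w p ≤ dist w q + dist q p := dist_triangle w q p
    have hvp : dist v p = dist u v - gr u w v := by rw [dist_comm v p]; exact hpb
    have hwq : dist q w = dist v w - dist v q := by linarith
    have e1 : dist q p = dist p q := dist_comm q p
    have e2 : dist w q = dist q w := dist_comm w q
    have e3 : dist w u = dist u w := dist_comm w u
    have e4 : dist w v = dist v w := dist_comm w v
    have hgrv : gr u w v = (dist u w + dist u v - dist w v) / 2 := rfl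
    unfold gr
    linarith [hpq]
  · -- q on segment from w to u
    have hsum := geoSeg_dist_add hswu hq
    have h1 : dist u p ≤ dist u q + dist q p := dist_triangle u q p
    have h2 : dist w p ≤ dist w q + dist q p := dist_triangle w q p
    have e1 : dist q p = dist p q := dist_comm q p
    have e2 : dist u q = dist q u := dist_comm u q
    have e3 : dist w u = dist u w := dist_comm w u
    have hgrv : gr u w v = (dist u w + dist u v - dist w v) / 2 := rfl
    unfold gr
    linarith [hpq]

/-- Four point inequality with constant `3δ`. -/
lemma four_point (w u v z : X) :
    min (gr w u z) (gr w z v) ≤ gr w u v + 3*δ := by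
  obtain ⟨suv, hsuv⟩ := hgeo u v
  obtain ⟨p, hps, hwp⟩ := exists_proj hδ hgeo hhyp w u v hsuv
  obtain ⟨svz, hsvz⟩ := hgeo v z
  obtain ⟨szu, hszu⟩ := hgeo z u
  obtain ⟨hthin, -, -⟩ := hhyp u v z suv svz szu hsuv hsvz hszu
  obtain ⟨q, hq, hpq⟩ := hthin p hps
  rcases hq with hq | hq
  · -- q on segment v-z : bound gr w z v
    have hsum := geoSeg_dist_add hsvz hq
    have hg : gr w v z ≤ dist w q := gr_le_dist_of_on_geodesic hsum
    have h2 : dist w q ≤ dist w p + dist p q := dist_triangle w p q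
    have : gr w z v ≤ gr w u v + 3*δ := by
      rw [gr_comm]; linarith
    exact le_trans (min_le_right _ _) this
  · -- q on segment z-u : bound gr w u z
    have hsum := geoSeg_dist_add hszu hq
    have hg : gr w z u ≤ dist w q := gr_le_dist_of_on_geodesic hsum
    have h2 : dist w q ≤ dist w p + dist p q := dist_triangle w p q
    have : gr w u z ≤ gr w u v + 3*δ := by
      rw [gr_comm]; linarith
    exact le_trans (min_le_left _ _) this

end Hyp

/-- The chain (local-to-global) lemma: a chain of points with long steps and
small successive Gromov products is a quasi-geodesic. -/
lemma chain_lemma {δ C : ℝ} (hδ : 0 ≤ δ) (hC : 0 ≤ C)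
    (H4 : ∀ w u v z : X, min (gr w u z) (gr w z v) ≤ gr w u v + 3*δ)
    (x : ℕ → X) (N : ℕ)
    (hprod : ∀ i, i + 2 ≤ N → gr (x (i+1)) (x i) (x (i+2)) ≤ C)
    (hdist : ∀ i, i + 1 ≤ N → 2*C + 6*δ < dist (x i) (x (i+1))) :
    (∑ i ∈ Finset.range N, dist (x i) (x (i+1))) - 2*(N:ℝ)*(C + 3*δ) ≤ dist (x 0) (x N) := by
  have key : ∀ n, n + 1 ≤ N → gr (x n) (x 0) (x (n+1)) ≤ C + 3*δ ∧
      (∑ i ∈ Finset.range (n+1), dist (x i) (x (i+1))) - 2*((n:ℝ)+1)*(C + 3*δ)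
        ≤ dist (x 0) (x (n+1)) := by
    intro n
    induction n with
    | zero =>
      intro h1
      constructor
      · rw [gr_self]; linarith
      · rw [Finset.sum_range_one]; push_cast; linarith
    | succ n ih =>
      intro h2
      have hn1 : n + 1 ≤ N := by omega
      obtain ⟨ihg, ihd⟩ := ih hn1
      have hdn := hdist n (by omega)
      have hA : gr (x (n+1)) (x (n+2)) (x n) ≤ C := by
        rw [gr_comm]; exact hprod n h2
      have hadd := gr_add (x (n+1)) (x n) (x 0)
      have hcomm : gr (x n) (x (n+1)) (x 0) = gr (x n) (x 0) (x (n+1)) := gr_comm _ _ _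
      have hB : C + 3*δ < gr (x (n+1)) (x n) (x 0) := by
        rw [dist_comm] at hdn; linarith
      have h4 := H4 (x (n+1)) (x (n+2)) (x n) (x 0)
      have hgnew : gr (x (n+1)) (x (n+2)) (x 0) ≤ C + 3*δ := by
        by_contra hcon
        push_neg at hcon
        have hBB : gr (x (n+1)) (x 0) (x n) = gr (x (n+1)) (x n) (x 0) := gr_comm _ _ _
        have hB2 : C + 3*δ < gr (x (n+1)) (x 0) (x n) := by rw [hBB]; exact hB
        have := lt_min hcon hB2
        linarith [this.trans_le h4]
      constructor
      · rw [gr_comm]; exact hgnew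
      · have hdeq := dist_eq_gr (x (n+1)) (x 0) (x (n+2))
        rw [Finset.sum_range_succ]
        have hd0 : dist (x (n+1)) (x 0) = dist (x 0) (x (n+1)) := dist_comm _ _
        have hgc : gr (x (n+1)) (x 0) (x (n+2)) = gr (x (n+1)) (x (n+2)) (x 0) := gr_comm _ _ _
        push_cast
        nlinarith [hgnew, ihd, hdeq]
  rcases N with _ | n
  · simp
  · have := (key n (le_refl _)).2
    push_cast at this ⊢
    linarith

/-- Alternating word in `a`, `b`. -/
noncomputable def altWord (a b : X ≃ᵢ X) : ℕ → (X ≃ᵢ X)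
  | 0 => 1
  | (i+1) => altWord a b i * (if Even i then a else b)

lemma altWord_two_mul (a b : X ≃ᵢ X) (k : ℕ) : altWord a b (2*k) = (a*b)^k := by
  induction k with
  | zero => simp [altWord]
  | succ k ih =>
    have h1 : 2*(k+1) = (2*k+1)+1 := by ring
    rw [h1]
    show altWord a b ((2*k+1)) * _ = _
    have h2 : altWord a b (2*k+1) = altWord a b (2*k) * a := by
      show altWord a b (2*k) * _ = _
      simp [Nat.even_iff]
    rw [h2, ih]
    have : ¬ Even (2*k+1) := by simp [Nat.even_iff, Nat.add_mod]
    rw [if_neg this, pow_succ, mul_assoc]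

lemma isom_apply_inv (g : X ≃ᵢ X) (x : X) : g (g⁻¹ x) = x := g.apply_symm_apply x

lemma orbit_chain {δ C : ℝ} (hδ : 0 ≤ δ) (hC : 0 ≤ C)
    (H4 : ∀ w u v z : X, min (gr w u z) (gr w z v) ≤ gr w u v + 3*δ)
    (a b : X ≃ᵢ X) (x : X)
    (hga : gr x (a⁻¹ x) (b x) ≤ C) (hgb : gr x (b⁻¹ x) (a x) ≤ C)
    (hda : 2*C + 6*δ < dist x (a x)) (hdb : 2*C + 6*δ < dist x (b x)) (D : ℝ)
    (hDa : D ≤ dist x (a x)) (hDb : D ≤ dist x (b x)) (k : ℕ) :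
    2*(k:ℝ)*(D - 2*C - 6*δ) ≤ dist x (((a*b)^k) x) := by
  set c : ℕ → X := fun i => altWord a b i x with hc
  have hstep : ∀ i, c (i+1) = altWord a b i ((if Even i then a else b) x) := by
    intro i; rfl
  have hdci : ∀ i, dist (c i) (c (i+1)) = dist x ((if Even i then a else b) x) := by
    intro i
    rw [hstep i]
    show dist (altWord a b i x) _ = _
    exact (altWord a b i).dist_eq x _
  have hDi : ∀ i, D ≤ dist (c i) (c (i+1)) := by
    intro i; rw [hdci i]; split <;> assumption
  have hdi : ∀ i, 2*C + 6*δ < dist (c i) (c (i+1)) := by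
    intro i; rw [hdci i]; split <;> assumption
  have hpro2 : ∀ i, gr (c (i+1)) (c i) (c (i+2)) ≤ C := by
    intro i
    set s₁ : X ≃ᵢ X := if Even i then a else b with hs₁
    set s₂ : X ≃ᵢ X := if Even (i+1) then a else b with hs₂
    have e1 : c (i+1) = (altWord a b (i+1)) x := rfl
    have e2 : c i = (altWord a b (i+1)) (s₁⁻¹ x) := by
      show altWord a b i x = _
      have : altWord a b (i+1) = altWord a b i * s₁ := rfl
      rw [this]
      show _ = (altWord a b i) (s₁ (s₁⁻¹ x))
      rw [isom_apply_inv]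
    have e3 : c (i+2) = (altWord a b (i+1)) (s₂ x) := by
      show altWord a b (i+2) x = _
      have : altWord a b (i+2) = altWord a b (i+1) * s₂ := rfl
      rw [this]; rfl
    rw [e1, e2, e3, gr_isom]
    rcases Nat.even_or_odd i with he | ho
    · have h1 : s₁ = a := by rw [hs₁, if_pos he]
      have h2 : s₂ = b := by
        rw [hs₂, if_neg]; simp [Nat.even_add_one, he]
      rw [h1, h2]; exact hga
    · have h1 : s₁ = b := by rw [hs₁, if_neg]; simpa using ho
      have h2 : s₂ = a := by
        rw [hs₂, if_pos]; rw [Nat.even_add_one]; simpa using ho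
      rw [h1, h2]; exact hgb
  have hchain := chain_lemma hδ hC H4 c (2*k)
    (fun i _ => hpro2 i) (fun i _ => hdi i)
  have hsum : 2*(k:ℝ)*D ≤ ∑ i ∈ Finset.range (2*k), dist (c i) (c (i+1)) := by
    calc 2*(k:ℝ)*D = ∑ _i ∈ Finset.range (2*k), D := by
          rw [Finset.sum_const, Finset.card_range]; push_cast; ring
      _ ≤ _ := Finset.sum_le_sum (fun i _ => hDi i)
  have hc0 : c 0 = x := rfl
  have hck : c (2*k) = ((a*b)^k) x := by rw [hc]; simp only; rw [altWord_two_mul]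
  rw [hc0, hck] at hchain
  push_cast at hchain
  nlinarith [hchain, hsum]

lemma dist_pow_le (g : X ≃ᵢ X) (y : X) (m : ℕ) : dist y ((g^m) y) ≤ (m:ℝ) * dist y (g y) := by
  induction m with
  | zero => simp
  | succ m ih =>
    have h1 : (g^(m+1)) y = g ((g^m) y) := by rw [pow_succ']; rfl
    have h2 : dist y ((g^(m+1)) y) ≤ dist y (g y) + dist (g y) (g ((g^m) y)) := by
      rw [h1]; exact dist_triangle _ _ _
    have h3 : dist (g y) (g ((g^m) y)) = dist y ((g^m) y) := g.dist_eq _ _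
    push_cast
    rw [h3] at h2
    linarith

lemma lower_everywhere (g : X ≃ᵢ X) (x : X) (c : ℝ)
    (h : ∀ m : ℕ, (m:ℝ) * c ≤ dist x ((g^m) x)) (y : X) : c ≤ dist y (g y) := by
  have key : ∀ m : ℕ, (m:ℝ) * c ≤ 2 * dist x y + (m:ℝ) * dist y (g y) := by
    intro m
    have h1 : dist x ((g^m) x) ≤ dist x y + dist y ((g^m) y) + dist ((g^m) y) ((g^m) x) := by
      have := dist_triangle x y ((g^m) y)
      have := dist_triangle x ((g^m) y) ((g^m) x)
      linarith
    have h2 : dist ((g^m) y) ((g^m) x) = dist y x := (g^m).dist_eq _ _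
    have h3 := dist_pow_le g y m
    have h4 := h m
    rw [h2, dist_comm y x] at h1
    linarith
  by_contra hcon
  push_neg at hcon
  set ε := c - dist y (g y) with hε
  have hεpos : 0 < ε := by linarith
  obtain ⟨m, hm⟩ := exists_nat_gt (2 * dist x y / ε)
  have hm0 : (0:ℝ) ≤ 2 * dist x y := by positivity
  have hmpos : (0:ℝ) < m := lt_of_le_of_lt (by positivity) hm
  have := key m
  have h5 : (m:ℝ) * ε ≤ 2 * dist x y := by nlinarith
  have h6 : 2 * dist x y < (m:ℝ) * ε := by
    rw [div_lt_iff₀ hεpos] at hm; linarith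
  linarith

section Plumb

variable (S : Set (X ≃ᵢ X))

lemma jointDispAt_nonneg (x : X) : 0 ≤ jointDispAt S x :=
  Real.sSup_nonneg (by rintro _ ⟨s, -, rfl⟩; exact dist_nonneg)

lemma le_jointDispAt (hfin : S.Finite) {s : X ≃ᵢ X} (hs : s ∈ S) (x : X) :
    dist x (s x) ≤ jointDispAt S x :=
  le_csSup (hfin.image _).bddAbove ⟨s, hs, rfl⟩

lemma jointMinDisp_le (x : X) : jointMinDisp S ≤ jointDispAt S x :=
  csInf_le ⟨0, by rintro _ ⟨y, rfl⟩; exact jointDispAt_nonneg S y⟩ ⟨x, rfl⟩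

lemma jointMinDisp_nonneg : 0 ≤ jointMinDisp S :=
  Real.sInf_nonneg (by rintro _ ⟨x, rfl⟩; exact jointDispAt_nonneg S x)

lemma exists_max_disp (hfin : S.Finite) (hne : S.Nonempty) (x : X) :
    ∃ a ∈ S, jointDispAt S x = dist x (a x) := by
  have hmem : sSup ((fun s : X ≃ᵢ X => dist x (s x)) '' S) ∈
      ((fun s : X ≃ᵢ X => dist x (s x)) '' S) :=
    (hne.image _).csSup_mem (hfin.image _)
  obtain ⟨a, ha, he⟩ := hmem
  exact ⟨a, ha, he.symm⟩

lemma exists_almost_min [Nonempty X] {ε : ℝ} (hε : 0 < ε) :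
    ∃ x : X, jointDispAt S x < jointMinDisp S + ε := by
  have h : jointMinDisp S < jointMinDisp S + ε := lt_add_of_pos_right _ hε
  obtain ⟨r, ⟨x, rfl⟩, hr⟩ := exists_lt_of_csInf_lt (Set.range_nonempty _) h
  exact ⟨x, hr⟩

lemma transLen_nonneg (g : X ≃ᵢ X) : 0 ≤ transLen g :=
  Real.sInf_nonneg (by rintro _ ⟨x, rfl⟩; exact dist_nonneg)

lemma transLen_le (g : X ≃ᵢ X) (x : X) : transLen g ≤ dist x (g x) :=
  csInf_le ⟨0, by rintro _ ⟨y, rfl⟩; exact dist_nonneg⟩ ⟨x, rfl⟩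

lemma le_transLen [Nonempty X] (g : X ≃ᵢ X) {c : ℝ} (h : ∀ y : X, c ≤ dist y (g y)) :
    c ≤ transLen g :=
  le_csInf (Set.range_nonempty _) (by rintro _ ⟨y, rfl⟩; exact h y)

lemma jointMinDisp_singleton (g : X ≃ᵢ X) : jointMinDisp {g} = transLen g := by
  unfold jointMinDisp transLen
  have h : jointDispAt {g} = fun x => dist x (g x) := by
    funext x
    unfold jointDispAt
    rw [Set.image_singleton, csSup_singleton]
  rw [h]

lemma dist_mul_apply_le (s t : X ≃ᵢ X) (x : X) :
    dist x ((s * t) x) ≤ dist x (s x) + dist x (t x) := by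
  have h1 : dist x ((s*t) x) ≤ dist x (s x) + dist (s x) ((s*t) x) := dist_triangle _ _ _
  have h2 : dist (s x) ((s*t) x) = dist x (t x) := s.dist_eq x (t x)
  linarith

lemma dist_pow_mem_le {S : Set (X ≃ᵢ X)} (hfin : S.Finite) (x : X) :
    ∀ j : ℕ, ∀ u ∈ S^j, dist x (u x) ≤ (j:ℝ) * jointDispAt S x := by
  intro j
  induction j with
  | zero =>
    intro u hu
    rw [pow_zero] at hu
    rw [Set.mem_one] at hu
    subst hu
    simp
  | succ j ih =>
    intro u hu
    rw [pow_succ] at hu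
    rw [Set.mem_mul] at hu
    obtain ⟨v, hv, s, hs, rfl⟩ := hu
    have := dist_mul_apply_le v s x
    have h2 := ih v hv
    have h3 := le_jointDispAt S hfin hs x
    push_cast
    linarith

/-- Lower bound on asympDisp of a singleton from uniform lower bounds on
translation lengths of powers. -/
lemma asympDisp_singleton_ge [Nonempty X] (w : X ≃ᵢ X) (c : ℝ)
    (h : ∀ k : ℕ, 1 ≤ k → (k:ℝ) * c ≤ transLen (w^k)) : c ≤ asympDisp {w} := by
  unfold asympDisp
  have heq : ∀ k:ℕ, jointMinDisp (({w} : Set (X ≃ᵢ X))^k) = transLen (w^k) := fun k => by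
    rw [Set.singleton_pow, jointMinDisp_singleton]
  obtain ⟨x⟩ := (inferInstance : Nonempty X)
  apply le_limsup_of_frequently_le
  · apply Eventually.frequently
    filter_upwards [eventually_ge_atTop 1] with k hk
    rw [heq]
    have hkpos : (0:ℝ) < k := by exact_mod_cast hk
    rw [le_div_iff₀ hkpos]
    linarith [h k hk]
  · refine isBoundedUnder_of ⟨dist x (w x), fun k => ?_⟩
    rcases Nat.eq_zero_or_pos k with rfl | hk
    · simp [dist_nonneg]
    · have hkpos : (0:ℝ) < k := by exact_mod_cast hk
      rw [heq, div_le_iff₀ hkpos]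
      calc transLen (w^k) ≤ dist x ((w^k) x) := transLen_le _ x
        _ ≤ (k:ℝ) * dist x (w x) := dist_pow_le w x k
        _ = dist x (w x) * (k:ℝ) := by ring

end Plumb

/-- **Main geometric lemma**: near a point almost realizing the joint minimal
displacement, there is a pair of generators forming a quasi-geodesic configuration. -/
lemma isom_inv_apply (g : X ≃ᵢ X) (x : X) : g⁻¹ (g x) = x := g.symm_apply_apply x

/-- **Main geometric lemma**: near a point almost realizing the joint minimal
displacement, there is a pair of generators forming a quasi-geodesic configuration. -/
lemma main_pair [Nonempty X] {δ : ℝ} (hδ : 0 ≤ δ)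
    (H4 : ∀ w u v z : X, min (gr w u z) (gr w z v) ≤ gr w u v + 3*δ)
    (hgeo : GeodesicSpace X)
    {S : Set (X ≃ᵢ X)} (hfin : S.Finite) (hne : S.Nonempty)
    {ε : ℝ} (hε : 0 < ε) (hL : 4*(ε + 19*δ) < jointMinDisp S) :
    ∃ (x : X) (a b : X ≃ᵢ X), a ∈ S ∧ b ∈ S ∧
      jointMinDisp S - 2*(ε + 19*δ) ≤ dist x (a x) ∧
      jointMinDisp S - 2*(ε + 19*δ) ≤ dist x (b x) ∧
      gr x (a⁻¹ x) (b x) ≤ ε + 19*δ ∧ gr x (b⁻¹ x) (a x) ≤ ε + 19*δ := by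
  set L := jointMinDisp S with hLdef
  set h : ℝ := ε + 19*δ with hhdef
  have hhpos : 0 < h := by positivity
  obtain ⟨x, hx⟩ := exists_almost_min S hε
  obtain ⟨a, haS, hax⟩ := exists_max_disp S hfin hne x
  have hlL : L ≤ dist x (a x) := by rw [← hax]; exact jointMinDisp_le S x
  have hlU : dist x (a x) < L + ε := by rw [← hax]; exact hx
  by_cases hPa : gr x (a x) (a⁻¹ x) ≤ h
  · have hPa' : gr x (a⁻¹ x) (a x) ≤ h := by rw [gr_comm]; exact hPa
    exact ⟨x, a, a, haS, haS, by linarith, by linarith, hPa', hPa'⟩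
  · push_neg at hPa
    obtain ⟨seg, hseg⟩ := hgeo x (a x)
    have hhl : h ≤ dist x (a x) := by linarith
    obtain ⟨y, hymem, hxy, hyax⟩ := geoSeg_exists_point hseg hhpos.le hhl
    -- F1 : gr x y (a x) = h
    have F1 : gr x y (a x) = h := by
      unfold gr; rw [hxy, hyax]; ring
    -- F2 : h - 3δ ≤ gr x y (a⁻¹ x)
    have F2 : h - 3*δ ≤ gr x y (a⁻¹ x) := by
      have h4 := H4 x y (a⁻¹ x) (a x)
      have hmin : h ≤ min (gr x y (a x)) (gr x (a x) (a⁻¹ x)) :=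
        le_min (le_of_eq F1.symm) hPa.le
      linarith [le_trans hmin h4]
    -- F3 : dist y (a y) is small
    have hgax1 : gr (a x) y x = dist x (a x) - h := by
      unfold gr
      rw [dist_comm (a x) y, hyax, dist_comm (a x) x, dist_comm y x, hxy]
      ring
    have hgax2 : gr (a x) x (a y) = gr x (a⁻¹ x) y := by
      have hh := gr_isom a x (a⁻¹ x) y
      rw [isom_apply_inv] at hh
      exact hh
    have F3 : dist y (a y) ≤ dist x (a x) - 2*h + 12*δ := by
      have h4 := H4 (a x) y (a y) x
      have hb1 : h - 3*δ ≤ gr (a x) x (a y) := by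
        rw [hgax2, gr_comm]; exact F2
      have hb2 : h - 3*δ ≤ gr (a x) y x := by rw [hgax1]; linarith
      have hmin : h - 3*δ ≤ min (gr (a x) y x) (gr (a x) x (a y)) := le_min hb2 hb1
      have hga : h - 6*δ ≤ gr (a x) y (a y) := by linarith [le_trans hmin h4]
      have hdeq := dist_eq_gr (a x) y (a y)
      have hdady : dist (a x) (a y) = h := by rw [a.dist_eq, hxy]
      rw [dist_comm (a x) y, hyax, hdady] at hdeq
      linarith
    -- F5 : get c moving y a lot
    have hLy : L ≤ jointDispAt S y := jointMinDisp_le S y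
    obtain ⟨c, hcS, hcy⟩ := exists_max_disp S hfin hne y
    have hdyc : L ≤ dist y (c y) := by rw [← hcy]; exact hLy
    have hclow : L - 2*h ≤ dist x (c x) := by
      have h1 : dist y (c y) ≤ dist y x + dist x (c x) + dist (c x) (c y) := by
        have t1 := dist_triangle y x (c x)
        have t2 := dist_triangle y (c x) (c y)
        linarith
      have h2 : dist (c x) (c y) = h := by rw [c.dist_eq, hxy]
      have h3 : dist y x = h := by rw [dist_comm, hxy]
      rw [h2, h3] at h1
      linarith
    have hcup : dist x (c x) < L + ε := by
      have hh := le_jointDispAt S hfin hcS x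
      rw [hax] at hh
      linarith
    -- [*] the key exact identity bound
    have hstar : gr x y (c x) + gr (c x) y (c y) ≤ h + ε/2 := by
      have e1 := dist_eq_gr (c x) y (c y)
      have e2 := dist_eq_gr x y (c x)
      have e3 : dist (c x) (c y) = h := by rw [c.dist_eq, hxy]
      have e4 : dist (c x) y = dist y (c x) := dist_comm _ _
      rw [e3, e4] at e1
      rw [hxy] at e2
      linarith
    have hgxcy : gr x (c x) y ≤ h := by
      have hh := gr_le_right x (c x) y; rw [hxy] at hh; exact hh
    have hg5 : dist x (c x) - h ≤ gr (c x) x y := by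
      have hh := gr_add x (c x) y
      linarith
    have hg5' : gr (c x) x y = gr (c x) y x := gr_comm _ _ _
    have hcc2 : gr (c x) x (c y) = gr x (c⁻¹ x) y := by
      have hh := gr_isom c x (c⁻¹ x) y
      rw [isom_apply_inv] at hh
      exact hh
    by_cases hA : h ≤ gr x (a⁻¹ x) (c x)
    · -- case 2a
      by_cases hPc : gr x (c x) (c⁻¹ x) ≤ h
      · have hPc' : gr x (c⁻¹ x) (c x) ≤ h := by rw [gr_comm]; exact hPc
        exact ⟨x, c, c, hcS, hcS, by linarith, by linarith, hPc', hPc'⟩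
      · exfalso
        push_neg at hPc
        have g1 : h - 6*δ ≤ gr x y (c x) := by
          have h4 := H4 x y (c x) (a⁻¹ x)
          have hmin : h - 3*δ ≤ min (gr x y (a⁻¹ x)) (gr x (a⁻¹ x) (c x)) :=
            le_min F2 (by linarith)
          linarith [le_trans hmin h4]
        have g2 : gr (c x) y (c y) ≤ ε/2 + 6*δ := by linarith
        have g3 : h - 9*δ ≤ gr x y (c⁻¹ x) := by
          have h4 := H4 x y (c⁻¹ x) (c x)
          have hmin : h - 6*δ ≤ min (gr x y (c x)) (gr x (c x) (c⁻¹ x)) :=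
            le_min g1 (by linarith)
          linarith [le_trans hmin h4]
        have g4 : h - 9*δ ≤ gr (c x) x (c y) := by
          rw [hcc2, gr_comm]; exact g3
        have g6 : h - 12*δ ≤ gr (c x) y (c y) := by
          have h4 := H4 (c x) y (c y) x
          have hmin : h - 9*δ ≤ min (gr (c x) y x) (gr (c x) x (c y)) := by
            refine le_min ?_ g4
            rw [← hg5']
            linarith
          linarith [le_trans hmin h4]
        linarith
    · -- not case 2a
      push_neg at hA
      by_cases hB : h ≤ gr x (c⁻¹ x) (a x)
      · -- case 2b
        by_cases hPc : gr x (c x) (c⁻¹ x) ≤ h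
        · have hPc' : gr x (c⁻¹ x) (c x) ≤ h := by rw [gr_comm]; exact hPc
          exact ⟨x, c, c, hcS, hcS, by linarith, by linarith, hPc', hPc'⟩
        · exfalso
          push_neg at hPc
          have k1 : h - 3*δ ≤ gr x y (c⁻¹ x) := by
            have h4 := H4 x y (c⁻¹ x) (a x)
            have hmin : h ≤ min (gr x y (a x)) (gr x (a x) (c⁻¹ x)) := by
              refine le_min (le_of_eq F1.symm) ?_
              rw [gr_comm]; exact hB
            linarith [le_trans hmin h4]
          have k2 : h - 6*δ ≤ gr x y (c x) := by
            have h4 := H4 x y (c x) (c⁻¹ x)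
            have hmin : h - 3*δ ≤ min (gr x y (c⁻¹ x)) (gr x (c⁻¹ x) (c x)) := by
              refine le_min k1 ?_
              rw [gr_comm]; linarith
            linarith [le_trans hmin h4]
          have k3 : gr (c x) y (c y) ≤ ε/2 + 6*δ := by linarith
          have k4 : h - 3*δ ≤ gr (c x) x (c y) := by
            rw [hcc2, gr_comm]; exact k1
          have k6 : h - 6*δ ≤ gr (c x) y (c y) := by
            have h4 := H4 (c x) y (c y) x
            have hmin : h - 3*δ ≤ min (gr (c x) y x) (gr (c x) x (c y)) := by
              refine le_min ?_ k4
              rw [← hg5']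
              linarith
            linarith [le_trans hmin h4]
          linarith
      · -- case 2c : the pair (a, c)
        push_neg at hB
        exact ⟨x, a, c, haS, hcS, by linarith, by linarith, hA.le, hB.le⟩


lemma pow_finite {S : Set (X ≃ᵢ X)} (hfin : S.Finite) (n : ℕ) : (S^n).Finite := by
  induction n with
  | zero => simpa using Set.finite_singleton (1 : X ≃ᵢ X)
  | succ k ih => rw [pow_succ]; exact ih.mul hfin

lemma pow_nonempty {S : Set (X ≃ᵢ X)} (hne : S.Nonempty) (n : ℕ) : (S^n).Nonempty := by
  induction n with
  | zero => rw [pow_zero]; exact ⟨1, rfl⟩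
  | succ k ih => rw [pow_succ]; exact ih.mul hne

lemma asympDisp_singleton_nonneg [Nonempty X] (w : X ≃ᵢ X) : 0 ≤ asympDisp {w} :=
  asympDisp_singleton_ge w 0 (fun k _ => by simpa using transLen_nonneg (w^k))

lemma lamD_nonneg [Nonempty X] (T : Set (X ≃ᵢ X)) : 0 ≤ lamD T :=
  Real.sSup_nonneg (by rintro _ ⟨s, -, rfl⟩; exact asympDisp_singleton_nonneg s)

lemma le_lamD {T : Set (X ≃ᵢ X)} (hTfin : T.Finite) {s : X ≃ᵢ X} (hs : s ∈ T) :
    asympDisp {s} ≤ lamD T :=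
  le_csSup (hTfin.image _).bddAbove ⟨s, hs, rfl⟩

/-- The engine: lower bound for `lamD (S^(2n))` in terms of the joint minimal
displacement. -/
lemma lamD_pow_ge [Nonempty X] {δ : ℝ} (hδ : 0 ≤ δ) (hgeo : GeodesicSpace X)
    (hhyp : GromovHyperbolic X δ) {S : Set (X ≃ᵢ X)} (hfin : S.Finite) (hne : S.Nonempty)
    (n : ℕ) (hn : 1 ≤ n) :
    (n:ℝ) * (jointMinDisp S - 100*δ) ≤ lamD (S^(2*n)) / 2 := by
  have H4 : ∀ w u v z : X, min (gr w u z) (gr w z v) ≤ gr w u v + 3*δ :=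
    fun w u v z => four_point hδ hgeo hhyp w u v z
  set L := jointMinDisp S with hLdef
  have hnpos : (0:ℝ) < n := by exact_mod_cast hn
  by_cases htriv : L ≤ 82*δ
  · have h1 : (n:ℝ) * (L - 100*δ) ≤ 0 := by
      apply mul_nonpos_of_nonneg_of_nonpos (by positivity)
      linarith
    have h2 : 0 ≤ lamD (S^(2*n)) := lamD_nonneg _
    linarith
  · push_neg at htriv
    -- step 1: for every small ε we get the bound
    have step : ∀ ε : ℝ, 0 < ε → ε < (L - 82*δ)/4 →
        (n:ℝ) * (2*(L - 4*ε - 82*δ)) ≤ lamD (S^(2*n)) := by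
      intro ε hε hεlt
      have hLbig : 4*(ε + 19*δ) < L := by linarith
      obtain ⟨x, a, b, haS, hbS, hda, hdb, hga, hgb⟩ :=
        main_pair hδ H4 hgeo hfin hne hε hLbig
      set C : ℝ := ε + 19*δ with hCdef
      have hCpos : 0 < C := by positivity
      have hDa : 2*C + 6*δ < dist x (a x) := by linarith
      have hDb : 2*C + 6*δ < dist x (b x) := by linarith
      have horb := orbit_chain hδ hCpos.le H4 a b x hga hgb hDa hDb (L - 2*C)
        (by linarith) (by linarith)
      -- membership of (a*b)^n in S^(2n)
      have hab : a * b ∈ S^2 := by rw [sq]; exact Set.mul_mem_mul haS hbS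
      have hw : (a*b)^n ∈ S^(2*n) := by
        rw [pow_mul]; exact Set.pow_mem_pow hab
      set cval : ℝ := 2*(L - 4*ε - 82*δ) with hcval
      have hcv : ∀ k : ℕ, (k:ℝ) * cval ≤ dist x (((a*b)^k) x) := by
        intro k
        have := horb k
        have heq : 2*(k:ℝ)*((L - 2*C) - 2*C - 6*δ) = (k:ℝ) * cval := by
          rw [hcval, hCdef]; ring
        linarith [heq ▸ this]
      -- translation length of powers of w = (a*b)^n
      have htl : ∀ k : ℕ, 1 ≤ k → (k:ℝ) * ((n:ℝ) * cval) ≤ transLen (((a*b)^n)^k) := by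
        intro k hk
        have hy : ∀ y : X, (n:ℝ)*(k:ℝ)*cval ≤ dist y ((((a*b)^n)^k) y) := by
          apply lower_everywhere (((a*b)^n)^k) x
          intro m
          have hpoweq : (((a*b)^n)^k)^m = (a*b)^(n*k*m) := by
            rw [pow_mul, pow_mul]
          rw [hpoweq]
          have := hcv (n*k*m)
          calc (m:ℝ) * ((n:ℝ)*(k:ℝ)*cval) = ((n*k*m : ℕ):ℝ) * cval := by push_cast; ring
            _ ≤ _ := hcv (n*k*m)
        have := le_transLen (((a*b)^n)^k) hy
        calc (k:ℝ) * ((n:ℝ) * cval) = (n:ℝ)*(k:ℝ)*cval := by ring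
          _ ≤ _ := this
      have hasymp : (n:ℝ) * cval ≤ asympDisp {(a*b)^n} :=
        asympDisp_singleton_ge _ _ htl
      have hlam := le_lamD (pow_finite hfin (2*n)) hw
      calc (n:ℝ) * (2*(L - 4*ε - 82*δ)) = (n:ℝ) * cval := by rw [hcval]
        _ ≤ asympDisp {(a*b)^n} := hasymp
        _ ≤ lamD (S^(2*n)) := hlam
    -- step 2: let ε → 0
    have step2 : (n:ℝ) * (2*(L - 82*δ)) ≤ lamD (S^(2*n)) := by
      by_contra hcon
      push_neg at hcon
      set σ := (n:ℝ) * (2*(L - 82*δ)) - lamD (S^(2*n)) with hσ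
      have hσpos : 0 < σ := by linarith
      set ε := min ((L - 82*δ)/8) (σ/(16*(n:ℝ))) with hε
      have hεpos : 0 < ε := by
        apply lt_min
        · linarith
        · positivity
      have hεlt : ε < (L - 82*δ)/4 := by
        calc ε ≤ (L - 82*δ)/8 := min_le_left _ _
          _ < (L - 82*δ)/4 := by linarith
      have := step ε hεpos hεlt
      have hεσ : ε ≤ σ/(16*(n:ℝ)) := min_le_right _ _
      have h8 : 8*(n:ℝ)*ε ≤ σ/2 := by
        rw [le_div_iff₀ (by positivity : (0:ℝ) < 16*(n:ℝ))] at hεσ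
        nlinarith
      nlinarith
    have hmono : (n:ℝ) * (L - 100*δ) ≤ (n:ℝ) * (L - 82*δ) := by
      apply mul_le_mul_of_nonneg_left (by linarith) (by positivity)
    linarith


lemma cobound_of_nonneg {f : ℕ → ℝ} (h : ∀ k, 0 ≤ f k) :
    IsCoboundedUnder (· ≤ ·) atTop f :=
  IsBoundedUnder.isCoboundedUnder_le (isBoundedUnder_of ⟨0, fun k => h k⟩)

lemma jointDispAt_pow_le {S : Set (X ≃ᵢ X)} (hfin : S.Finite) (hne : S.Nonempty)
    (x : X) (m : ℕ) : jointDispAt (S^m) x ≤ (m:ℝ) * jointDispAt S x :=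
  csSup_le ((pow_nonempty hne m).image _)
    (by rintro _ ⟨u, hu, rfl⟩; exact dist_pow_mem_le hfin x m u hu)

lemma asympDisp_le_mul [Nonempty X] {T : Set (X ≃ᵢ X)} (hTfin : T.Finite) {j : ℕ}
    (hj : 1 ≤ j) {u : X ≃ᵢ X} (hu : u ∈ T^j) :
    asympDisp {u} ≤ (j:ℝ) * jointMinDisp T := by
  have hjpos : (0:ℝ) < j := by exact_mod_cast hj
  have key : ∀ x : X, asympDisp {u} ≤ (j:ℝ) * jointDispAt T x := by
    intro x
    unfold asympDisp
    apply limsup_le_of_le (cobound_of_nonneg (fun k => by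
      rw [Set.singleton_pow, jointMinDisp_singleton]
      exact div_nonneg (transLen_nonneg _) (Nat.cast_nonneg _)))
    filter_upwards [eventually_ge_atTop 1] with k hk
    rw [Set.singleton_pow, jointMinDisp_singleton]
    have hkpos : (0:ℝ) < k := by exact_mod_cast hk
    rw [div_le_iff₀ hkpos]
    have h1 : u^k ∈ T^(j*k) := by rw [pow_mul]; exact Set.pow_mem_pow hu
    have h2 := dist_pow_mem_le hTfin x (j*k) _ h1
    calc transLen (u^k) ≤ dist x ((u^k) x) := transLen_le _ _
      _ ≤ ((j*k : ℕ):ℝ) * jointDispAt T x := h2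
      _ = (j:ℝ) * jointDispAt T x * k := by push_cast; ring
  have hdiv : asympDisp {u} / (j:ℝ) ≤ jointMinDisp T := by
    apply le_csInf (Set.range_nonempty _)
    rintro _ ⟨x, rfl⟩
    rw [div_le_iff₀ hjpos]
    linarith [key x]
  calc asympDisp {u} = (asympDisp {u} / (j:ℝ)) * j := by field_simp
    _ ≤ jointMinDisp T * j := mul_le_mul_of_nonneg_right hdiv hjpos.le
    _ = (j:ℝ) * jointMinDisp T := by ring

lemma lamD_le_jointMinDisp [Nonempty X] {T : Set (X ≃ᵢ X)} (hTfin : T.Finite)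
    (hTne : T.Nonempty) : lamD T ≤ jointMinDisp T := by
  apply csSup_le (hTne.image _)
  rintro _ ⟨s, hs, rfl⟩
  have h := asympDisp_le_mul hTfin (le_refl 1) (u := s) (by rwa [pow_one])
  simpa using h

lemma lamD_sq_le [Nonempty X] {T : Set (X ≃ᵢ X)} (hTfin : T.Finite)
    (hTne : T.Nonempty) : lamD (T^2) / 2 ≤ jointMinDisp T := by
  rw [div_le_iff₀ (by norm_num : (0:ℝ) < 2)]
  apply csSup_le ((pow_nonempty hTne 2).image _)
  rintro _ ⟨s, hs, rfl⟩
  have h := asympDisp_le_mul hTfin (by norm_num : 1 ≤ 2) hs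
  push_cast at h
  linarith

lemma bddAbove_lamInf_image [Nonempty X] {S : Set (X ≃ᵢ X)} (hfin : S.Finite)
    (hne : S.Nonempty) : BddAbove ((fun j : ℕ => lamD (S^j) / j) '' Set.Ici 1) := by
  obtain ⟨x⟩ := (inferInstance : Nonempty X)
  refine ⟨jointDispAt S x, ?_⟩
  rintro _ ⟨j, hj, rfl⟩
  have hj1 : 1 ≤ j := hj
  have hjpos : (0:ℝ) < j := by exact_mod_cast hj1
  rw [div_le_iff₀ hjpos]
  calc lamD (S^j) ≤ jointMinDisp (S^j) :=
        lamD_le_jointMinDisp (pow_finite hfin j) (pow_nonempty hne j)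
    _ ≤ jointDispAt (S^j) x := jointMinDisp_le _ x
    _ ≤ (j:ℝ) * jointDispAt S x := jointDispAt_pow_le hfin hne x j
    _ = jointDispAt S x * j := by ring

/-- Easy half of Berger–Wang. -/
lemma lamD_div_le_asympDisp [Nonempty X] {S : Set (X ≃ᵢ X)} (hfin : S.Finite)
    (hne : S.Nonempty) {j : ℕ} (hj : 1 ≤ j) : lamD (S^j) / j ≤ asympDisp S := by
  obtain ⟨x⟩ := (inferInstance : Nonempty X)
  have hjpos : (0:ℝ) < j := by exact_mod_cast hj
  set B := {a : ℝ | ∀ᶠ m : ℕ in atTop, jointMinDisp (S^m) / (m:ℝ) ≤ a} with hB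
  have hAeq : asympDisp S = sInf B := by
    unfold asympDisp
    rw [limsup_eq]
  have key : ∀ s ∈ S^j, ∀ a ∈ B, asympDisp {s} ≤ (j:ℝ) * a := by
    intro s hs a ha
    unfold asympDisp
    apply limsup_le_of_le (cobound_of_nonneg (fun k => by
      rw [Set.singleton_pow, jointMinDisp_singleton]
      exact div_nonneg (transLen_nonneg _) (Nat.cast_nonneg _)))
    have hmul : Tendsto (fun k : ℕ => j*k) atTop atTop := by
      apply tendsto_atTop_mono (fun k => Nat.le_mul_of_pos_left k (by omega))
      exact tendsto_id
    filter_upwards [eventually_ge_atTop 1, hmul.eventually ha] with k hk hjk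
    rw [Set.singleton_pow, jointMinDisp_singleton]
    have hkpos : (0:ℝ) < k := by exact_mod_cast hk
    rw [div_le_iff₀ hkpos]
    have hjkpos : (0:ℝ) < ((j*k : ℕ):ℝ) := by
      have : 1 ≤ j*k := Nat.one_le_iff_ne_zero.2 (by positivity)
      exact_mod_cast this
    have h1 : transLen (s^k) ≤ jointMinDisp (S^(j*k)) := by
      apply le_csInf (Set.range_nonempty _)
      rintro _ ⟨y, rfl⟩
      refine le_trans (transLen_le _ y) (le_jointDispAt _ (pow_finite hfin _) ?_ y)
      rw [pow_mul]; exact Set.pow_mem_pow hs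
    have h2 : jointMinDisp (S^(j*k)) ≤ a * ((j*k : ℕ):ℝ) := by
      have h3 : jointMinDisp (S^(j*k)) / ((j*k:ℕ):ℝ) ≤ a := hjk
      rw [div_le_iff₀ hjkpos] at h3
      exact h3
    calc transLen (s^k) ≤ a * ((j*k : ℕ):ℝ) := le_trans h1 h2
      _ = (j:ℝ) * a * k := by push_cast; ring
  have hBne : B.Nonempty := by
    refine ⟨max (jointDispAt S x) 0, ?_⟩
    rw [hB]
    simp only [Set.mem_setOf_eq]
    filter_upwards [eventually_ge_atTop 1] with m hm
    have hm0 : 0 < m := hm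
    have hmpos : (0:ℝ) < m := by exact_mod_cast hm0
    rw [div_le_iff₀ hmpos]
    calc jointMinDisp (S^m) ≤ jointDispAt (S^m) x := jointMinDisp_le _ x
      _ ≤ (m:ℝ) * jointDispAt S x := jointDispAt_pow_le hfin hne x m
      _ ≤ max (jointDispAt S x) 0 * m := by
          have := le_max_left (jointDispAt S x) 0
          nlinarith
  rw [hAeq, div_le_iff₀ hjpos]
  have : lamD (S^j) ≤ (j:ℝ) * sInf B := by
    apply csSup_le ((pow_nonempty hne j).image _)
    rintro _ ⟨s, hs, rfl⟩
    have h1 : asympDisp {s} / (j:ℝ) ≤ sInf B := by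
      apply le_csInf hBne
      intro a ha
      rw [div_le_iff₀ hjpos]
      have := key s hs a ha
      linarith
    rw [div_le_iff₀ hjpos] at h1
    linarith
  linarith

/-- The Berger–Wang identity. -/
lemma berger_wang [Nonempty X] {δ : ℝ} (hδ : 0 ≤ δ) (hgeo : GeodesicSpace X)
    (hhyp : GromovHyperbolic X δ) {S : Set (X ≃ᵢ X)} (hfin : S.Finite)
    (hne : S.Nonempty) : lamInf S = asympDisp S := by
  apply le_antisymm
  · apply csSup_le
    · exact ⟨lamD (S^1)/(1:ℕ), ⟨1, Set.self_mem_Ici, rfl⟩⟩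
    · rintro _ ⟨j, hj, rfl⟩
      exact lamD_div_le_asympDisp hfin hne hj
  · apply le_of_forall_pos_le_add
    intro σ hσ
    unfold asympDisp
    apply limsup_le_of_le (cobound_of_nonneg (fun k =>
      div_nonneg (jointMinDisp_nonneg _) (Nat.cast_nonneg _)))
    obtain ⟨M, hM⟩ := exists_nat_gt (100*δ/σ)
    filter_upwards [eventually_ge_atTop (max M 1)] with m hm
    have hm1 : 1 ≤ m := le_trans (le_max_right _ _) hm
    have hmM : M ≤ m := le_trans (le_max_left _ _) hm
    have hmpos : (0:ℝ) < m := by exact_mod_cast hm1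
    have hδm : 100*δ/(m:ℝ) ≤ σ := by
      rw [div_le_iff₀ hmpos]
      rw [div_lt_iff₀ hσ] at hM
      have hMm : (M:ℝ) ≤ m := by exact_mod_cast hmM
      nlinarith
    -- engine applied to S^m with n = 1
    have hkey := lamD_pow_ge hδ hgeo hhyp (pow_finite hfin m) (pow_nonempty hne m)
      1 (le_refl 1)
    have he : (S^m)^(2*1) = S^(m*2) := by rw [← pow_mul]
    rw [he] at hkey
    push_cast at hkey
    -- lamInf ≥ lamD (S^(m*2)) / (m*2)
    have hmem : lamD (S^(m*2)) / ((m*2:ℕ):ℝ) ∈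
        (fun j : ℕ => lamD (S^j) / j) '' Set.Ici 1 :=
      ⟨m*2, by simp; omega, rfl⟩
    have hle : lamD (S^(m*2)) / ((m*2:ℕ):ℝ) ≤ lamInf S :=
      le_csSup (bddAbove_lamInf_image hfin hne) hmem
    -- combine
    have hm2pos : (0:ℝ) < ((m*2:ℕ):ℝ) := by positivity
    rw [div_le_iff₀ hmpos]
    have harith : jointMinDisp (S^m) ≤ lamD (S^(m*2))/2 + 100*δ := by linarith
    have h2 : lamD (S^(m*2))/2 = (lamD (S^(m*2)) / ((m*2:ℕ):ℝ)) * m := by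
      push_cast
      field_simp
    calc jointMinDisp (S^m) ≤ lamD (S^(m*2))/2 + 100*δ := harith
      _ = (lamD (S^(m*2)) / ((m*2:ℕ):ℝ)) * m + 100*δ := by rw [h2]
      _ ≤ lamInf S * m + (100*δ/(m:ℝ)) * m := by
          have : 100*δ = (100*δ/(m:ℝ)) * m := by field_simp
          nlinarith [hle]
      _ ≤ (lamInf S + σ) * m := by nlinarith


section EmptyCase

variable [IsEmpty X]

lemma jointMinDisp_empty (T : Set (X ≃ᵢ X)) : jointMinDisp T = 0 := by
  unfold jointMinDisp
  rw [Set.range_eq_empty]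
  exact Real.sInf_empty

lemma asympDisp_empty (T : Set (X ≃ᵢ X)) : asympDisp T = 0 := by
  unfold asympDisp
  have h : (fun n : ℕ => jointMinDisp (T^n) / n) = fun _ => (0:ℝ) := by
    funext n
    rw [jointMinDisp_empty, zero_div]
  rw [h]
  exact limsup_const 0

lemma lamD_empty {T : Set (X ≃ᵢ X)} (hTne : T.Nonempty) : lamD T = 0 := by
  unfold lamD
  have h : (fun s : X ≃ᵢ X => asympDisp {s}) = fun _ => (0:ℝ) := by
    funext s
    exact asympDisp_empty {s}
  rw [h, hTne.image_const]
  exact csSup_singleton 0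

lemma lamInf_empty {S : Set (X ≃ᵢ X)} (hne : S.Nonempty) : lamInf S = 0 := by
  unfold lamInf
  have h : (fun j : ℕ => lamD (S^j) / j) = fun _ => (0:ℝ) := by
    funext j
    rw [lamD_empty (pow_nonempty hne j), zero_div]
  rw [h, (Set.nonempty_Ici (a := (1:ℕ))).image_const]
  exact csSup_singleton 0

end EmptyCase

end BochiBW

universe u

/-- There is an absolute constant `K > 0` such that for every `δ ≥ 0`, every
geodesic `δ`-hyperbolic space `X`, every finite set `S` of isometries and every `n ≥ 1`,
`n (L(S) − Kδ) ≤ λ₂(S^n) ≤ L(S^n)`; moreover the geometric Berger–Wang identity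
`λ_∞(S) = ℓ(S)` holds. -/
theorem exists_const_growth_bochi_hyperbolic :
    ∃ K : ℝ, 0 < K ∧ ∀ (δ : ℝ), 0 ≤ δ → ∀ (X : Type u) [MetricSpace X],
      GeodesicSpace X → GromovHyperbolic X δ →
        ∀ S : Set (X ≃ᵢ X), S.Finite → S.Nonempty →
          (∀ n : ℕ, 1 ≤ n →
            n * (jointMinDisp S - K * δ) ≤ max (lamD (S ^ n)) (lamD ((S ^ n) ^ 2) / 2) ∧
            max (lamD (S ^ n)) (lamD ((S ^ n) ^ 2) / 2) ≤ jointMinDisp (S ^ n)) ∧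
          lamInf S = asympDisp S := by
  refine ⟨100, by norm_num, ?_⟩
  intro δ hδ X _ hgeo hhyp S hfin hne
  rcases isEmpty_or_nonempty X with hX | hX
  · constructor
    · intro n hn
      have h1 : lamD (S^n) = 0 := BochiBW.lamD_empty (BochiBW.pow_nonempty hne n)
      have h2 : lamD ((S^n)^2) = 0 :=
        BochiBW.lamD_empty (BochiBW.pow_nonempty (BochiBW.pow_nonempty hne n) 2)
      have h3 : jointMinDisp S = 0 := BochiBW.jointMinDisp_empty S
      have h4 : jointMinDisp (S^n) = 0 := BochiBW.jointMinDisp_empty (S^n)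
      rw [h1, h2, h3, h4]
      constructor
      · have : (n:ℝ) * (0 - 100*δ) ≤ 0 := by
          apply mul_nonpos_of_nonneg_of_nonpos (Nat.cast_nonneg n)
          linarith
        simpa using this
      · simp
    · rw [BochiBW.lamInf_empty hne, BochiBW.asympDisp_empty S]
  · constructor
    · intro n hn
      constructor
      · have h1 := BochiBW.lamD_pow_ge hδ hgeo hhyp hfin hne n hn
        have he : S^(2*n) = (S^n)^2 := by rw [mul_comm, pow_mul]
        rw [he] at h1
        exact le_trans h1 (le_max_right _ _)
      · exact max_le
          (BochiBW.lamD_le_jointMinDisp (BochiBW.pow_finite hfin n)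
            (BochiBW.pow_nonempty hne n))
          (BochiBW.lamD_sq_le (BochiBW.pow_finite hfin n) (BochiBW.pow_nonempty hne n))
    · exact BochiBW.berger_wang hδ hgeo hhyp hfin hne
end

section
/- (Helly-type theorem for hyperbolic spaces.) Let X be a geodesic δ-hyperbolic metric space (δ ≥ 0) and let C₁, …, C_m be finitely many nonempty convex subsets of X such that C_i ∩ C_j ≠ ∅ for all i, j. Then the intersection of the closed 28δ-neighborhoods of all the C_i is nonempty: there exists a point x ∈ X with d(x, C_i) ≤ 28δ for every i. -/
open Pointwise Filter

section Aux
variable {X : Type*} [MetricSpace X] {s : Set X} {a b : X}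

lemma IsGeodesicSegment.left_mem (h : IsGeodesicSegment s a b) : a ∈ s := by
  obtain ⟨f, h0, hd, hiso, rfl⟩ := h
  exact ⟨0, ⟨le_refl 0, dist_nonneg⟩, h0⟩

lemma IsGeodesicSegment.right_mem (h : IsGeodesicSegment s a b) : b ∈ s := by
  obtain ⟨f, h0, hd, hiso, rfl⟩ := h
  exact ⟨dist a b, ⟨dist_nonneg, le_refl _⟩, hd⟩

lemma IsGeodesicSegment.dist_left_add (h : IsGeodesicSegment s a b) {q : X} (hq : q ∈ s) :
    dist a q + dist q b = dist a b := by
  obtain ⟨f, h0, hd, hiso, rfl⟩ := h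
  obtain ⟨u, hu, rfl⟩ := hq
  have h1 : dist a (f u) = u := by
    rw [← h0, hiso 0 ⟨le_refl 0, dist_nonneg⟩ u hu, zero_sub, abs_neg, abs_of_nonneg hu.1]
  have h2 : dist (f u) b = dist a b - u := by
    have := hiso u hu (dist a b) ⟨dist_nonneg, le_refl _⟩
    rw [hd] at this
    rw [this, abs_sub_comm, abs_of_nonneg (by linarith [hu.2])]
  rw [h1, h2]; ring

lemma IsGeodesicSegment.exists_point (h : IsGeodesicSegment s a b) {t : ℝ}
    (ht : t ∈ Set.Icc 0 (dist a b)) :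
    ∃ w ∈ s, dist a w = t ∧ dist w b = dist a b - t := by
  obtain ⟨f, h0, hd, hiso, rfl⟩ := h
  refine ⟨f t, Set.mem_image_of_mem f ht, ?_, ?_⟩
  · rw [← h0, hiso 0 ⟨le_refl 0, dist_nonneg⟩ t ht, zero_sub, abs_neg, abs_of_nonneg ht.1]
  · have := hiso t ht (dist a b) ⟨dist_nonneg, le_refl _⟩
    rw [hd] at this
    rw [this, abs_sub_comm, abs_of_nonneg (by linarith [ht.2])]

lemma IsGeodesicSegment.continuousOn (h : IsGeodesicSegment s a b) :
    ∃ f : ℝ → X, s = f '' Set.Icc (0:ℝ) (dist a b) ∧ ContinuousOn f (Set.Icc 0 (dist a b)) := by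
  obtain ⟨f, h0, hd, hiso, rfl⟩ := h
  refine ⟨f, rfl, ?_⟩
  have : LipschitzOnWith 1 f (Set.Icc 0 (dist a b)) := by
    apply LipschitzOnWith.of_dist_le_mul
    intro u hu v hv
    rw [hiso u hu v hv, NNReal.coe_one, one_mul, Real.dist_eq]
  exact this.continuousOn

lemma IsGeodesicSegment.isCompact (h : IsGeodesicSegment s a b) : IsCompact s := by
  obtain ⟨f, rfl, hc⟩ := h.continuousOn
  exact isCompact_Icc.image_of_continuousOn hc

lemma IsGeodesicSegment.isPreconnected (h : IsGeodesicSegment s a b) : IsPreconnected s := by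
  obtain ⟨f, rfl, hc⟩ := h.continuousOn
  exact isPreconnected_Icc.image f hc

end Aux

section Zero
variable {X : Type*} [MetricSpace X]

lemma GeodConvex.inter {A B : Set X} (hA : GeodConvex A) (hB : GeodConvex B) :
    GeodConvex (A ∩ B) :=
  fun a ha b hb s hs =>
    Set.subset_inter (hA a ha.1 b hb.1 s hs) (hB a ha.2 b hb.2 s hs)

lemma triple_point (hgeo : GeodesicSpace X) (hhyp : GromovHyperbolic X 0)
    {C1 C2 C3 : Set X}
    (h1 : GeodConvex C1) (h2 : GeodConvex C2) (h3 : GeodConvex C3)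
    (h12 : (C1 ∩ C2).Nonempty) (h23 : (C2 ∩ C3).Nonempty) (h31 : (C3 ∩ C1).Nonempty) :
    ∃ x, x ∈ C1 ∧ x ∈ C2 ∧ x ∈ C3 := by
  obtain ⟨a, ha1, ha2⟩ := h12
  obtain ⟨b, hb2, hb3⟩ := h23
  obtain ⟨c, hc3, hc1⟩ := h31
  obtain ⟨sab, hsab⟩ := hgeo a b
  obtain ⟨sbc, hsbc⟩ := hgeo b c
  obtain ⟨sca, hsca⟩ := hgeo c a
  obtain ⟨thin, -, -⟩ := hhyp a b c sab sbc sca hsab hsbc hsca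
  have hsub : sab ⊆ sbc ∪ sca := by
    intro x hx
    obtain ⟨y, hy, hxy⟩ := thin x hx
    have hxy' : x = y := by rw [← dist_le_zero]; exact hxy
    rwa [hxy']
  have hconn := hsab.isPreconnected
  rw [isPreconnected_closed_iff] at hconn
  obtain ⟨x, hxab, hxbc, hxca⟩ := hconn sbc sca hsbc.isCompact.isClosed hsca.isCompact.isClosed
    hsub ⟨b, hsab.right_mem, hsbc.left_mem⟩ ⟨a, hsab.left_mem, hsca.right_mem⟩
  exact ⟨x, h1 c hc1 a ha1 sca hsca hxca, h2 a ha2 b hb2 sab hsab hxab,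
    h3 b hb3 c hc3 sbc hsbc hxbc⟩

lemma helly_zero (hgeo : GeodesicSpace X) (hhyp : GromovHyperbolic X 0) :
    ∀ n : ℕ, ∀ C : Fin (n+1) → Set X, (∀ i, (C i).Nonempty) → (∀ i, GeodConvex (C i)) →
      (∀ i j, (C i ∩ C j).Nonempty) → ∃ x, ∀ i, x ∈ C i := by
  intro n
  induction n with
  | zero =>
    intro C hne _ _
    obtain ⟨x, hx⟩ := hne 0
    exact ⟨x, fun i => by fin_cases i; exact hx⟩
  | succ n ih =>
    intro C hne hconv hpair
    set D : Fin (n+1) → Set X :=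
      fun i => if i = 0 then C 0 ∩ C (Fin.last (n+1)) else C i.castSucc with hD
    have hDne : ∀ i, (D i).Nonempty := by
      intro i
      rcases eq_or_ne i 0 with rfl | hi
      · simpa [hD] using hpair 0 (Fin.last (n+1))
      · simpa [hD, hi] using hne i.castSucc
    have hDconv : ∀ i, GeodConvex (D i) := by
      intro i
      rcases eq_or_ne i 0 with rfl | hi
      · simpa [hD] using (hconv 0).inter (hconv (Fin.last (n+1)))
      · simpa [hD, hi] using hconv i.castSucc
    have hDpair : ∀ i j, (D i ∩ D j).Nonempty := by
      intro i j
      rcases eq_or_ne i 0 with rfl | hi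
      · rcases eq_or_ne j 0 with rfl | hj
        · simpa [hD] using hpair 0 (Fin.last (n+1))
        · obtain ⟨x, hx1, hx2, hx3⟩ := triple_point hgeo hhyp (hconv 0)
            (hconv (Fin.last (n+1))) (hconv j.castSucc) (hpair 0 (Fin.last (n+1)))
            (hpair (Fin.last (n+1)) j.castSucc) (hpair j.castSucc 0)
          exact ⟨x, by simp [hD, hj]; exact ⟨⟨hx1, hx2⟩, hx3⟩⟩
      · rcases eq_or_ne j 0 with rfl | hj
        · obtain ⟨x, hx1, hx2, hx3⟩ := triple_point hgeo hhyp (hconv 0)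
            (hconv (Fin.last (n+1))) (hconv i.castSucc) (hpair 0 (Fin.last (n+1)))
            (hpair (Fin.last (n+1)) i.castSucc) (hpair i.castSucc 0)
          exact ⟨x, by simp [hD, hi]; exact ⟨hx3, hx1, hx2⟩⟩
        · have := hpair i.castSucc j.castSucc
          simpa [hD, hi, hj] using this
    obtain ⟨x, hx⟩ := ih D hDne hDconv hDpair
    have h0 : x ∈ C 0 ∩ C (Fin.last (n+1)) := by simpa [hD] using hx 0
    refine ⟨x, fun j => ?_⟩
    refine Fin.lastCases ?_ (fun i => ?_) j
    · exact h0.2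
    · rcases eq_or_ne i 0 with rfl | hi
      · simpa using h0.1
      · simpa [hD, hi] using hx i
end Zero

/-- Helly-type theorem for hyperbolic spaces. In a geodesic `δ`-hyperbolic
space, if finitely many nonempty convex subsets pairwise intersect, then the closed
`28δ`-neighborhoods of all of them have a common point. -/
theorem helly_hyperbolic {X : Type*} [MetricSpace X] {δ : ℝ} (hδ : 0 ≤ δ)
    (hgeo : GeodesicSpace X) (hhyp : GromovHyperbolic X δ)
    (m : ℕ) (hm : 0 < m) (C : Fin m → Set X)
    (hne : ∀ i, (C i).Nonempty) (hconv : ∀ i, GeodConvex (C i))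
    (hpair : ∀ i j, (C i ∩ C j).Nonempty) :
    ∃ x : X, ∀ i, Metric.infDist x (C i) ≤ 28 * δ := by
  obtain ⟨n, rfl⟩ : ∃ n, m = n + 1 := ⟨m - 1, (Nat.succ_pred_eq_of_pos hm).symm⟩
  rcases eq_or_lt_of_le hδ with hδ0 | hδpos
  · -- δ = 0 : exact Helly
    obtain rfl : (0:ℝ) = δ := hδ0
    obtain ⟨x, hx⟩ := helly_zero hgeo hhyp n C hne hconv hpair
    exact ⟨x, fun i => by
      rw [Metric.infDist_zero_of_mem (hx i)]; linarith⟩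
  · -- δ > 0 : approximate minimizer argument
    haveI : Nonempty (Fin (n+1)) := ⟨0⟩
    set f : X → ℝ :=
      fun x => Finset.univ.sup' Finset.univ_nonempty (fun i => Metric.infDist x (C i)) with hf
    have hfle : ∀ x i, Metric.infDist x (C i) ≤ f x := by
      intro x i
      simp only [hf]
      exact Finset.le_sup' (fun i => Metric.infDist x (C i)) (Finset.mem_univ i)
    have hf0 : ∀ x, 0 ≤ f x := fun x => le_trans Metric.infDist_nonneg (hfle x 0)
    have hXne : Nonempty X := ⟨(hne 0).choose⟩
    have hrange : (Set.range f).Nonempty := Set.range_nonempty f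
    have hbdd : BddBelow (Set.range f) := ⟨0, by rintro y ⟨x, rfl⟩; exact hf0 x⟩
    set r := sInf (Set.range f) with hr
    have hrle : ∀ x, r ≤ f x := fun x => csInf_le hbdd ⟨x, rfl⟩
    by_cases hcase : r ≤ 20 * δ
    · obtain ⟨y, ⟨x, rfl⟩, hy⟩ := Real.lt_sInf_add_pos hrange
        (show (0:ℝ) < 8 * δ by linarith)
      exact ⟨x, fun i => le_trans (hfle x i) (by linarith)⟩
    · push_neg at hcase
      exfalso
      obtain ⟨y1, ⟨x, rfl⟩, hfx⟩ := Real.lt_sInf_add_pos hrange hδpos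
      obtain ⟨i0, -, hi0⟩ := Finset.exists_mem_eq_sup' (Finset.univ_nonempty)
        (fun i => Metric.infDist x (C i))
      have hinf0 : Metric.infDist x (C i0) = f x := hi0.symm
      have hfxr : r ≤ f x := hrle x
      obtain ⟨y0, hy0C, hy0d⟩ := (Metric.infDist_lt_iff (hne i0)).1
        (show Metric.infDist x (C i0) < f x + δ by rw [hinf0]; linarith)
      have hxy0_lb : r ≤ dist x y0 := by
        have := Metric.infDist_le_dist_of_mem (x := x) hy0C
        rw [hinf0] at this; linarith
      obtain ⟨s0, hs0⟩ := hgeo x y0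
      obtain ⟨w, hw, hxw, hwy0⟩ := hs0.exists_point
        (show (7*δ) ∈ Set.Icc 0 (dist x y0) from ⟨by linarith, by linarith⟩)
      have hclaim : ∀ i, Metric.infDist w (C i) ≤ r - δ := by
        intro i
        obtain ⟨z, hzi, hzi0⟩ := hpair i i0
        obtain ⟨sbc, hsbc⟩ := hgeo y0 z
        obtain ⟨sca, hsca⟩ := hgeo z x
        obtain ⟨thin1, -, -⟩ := hhyp x y0 z s0 sbc sca hs0 hsbc hsca
        obtain ⟨p, hp, hwp⟩ := thin1 w hw
        rcases hp with hp | hp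
        · -- p on [y0,z] ⊆ C i0 : impossible since x is far from C i0
          exfalso
          have hsub : sbc ⊆ C i0 := hconv i0 y0 hy0C z hzi0 sbc hsbc
          have h1 : Metric.infDist x (C i0) ≤ dist x p :=
            Metric.infDist_le_dist_of_mem (hsub hp)
          have h2 : dist x p ≤ dist x w + dist w p := dist_triangle x w p
          rw [hinf0] at h1
          linarith
        · -- p on [z,x]
          obtain ⟨yi, hyiC, hyid⟩ := (Metric.infDist_lt_iff (hne i)).1
            (show Metric.infDist x (C i) < f x + δ by linarith [hfle x i])
          obtain ⟨sxy, hsxy⟩ := hgeo x yi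
          obtain ⟨syz, hsyz⟩ := hgeo yi z
          obtain ⟨thin2, -, -⟩ := hhyp z x yi sca sxy syz hsca hsxy hsyz
          obtain ⟨u, hu, hpu⟩ := thin2 p hp
          rcases hu with hu | hu
          · -- u on [x,yi]
            have hsum := hsxy.dist_left_add hu
            have hxp : dist x w - dist w p ≤ dist x p := by
              have := dist_triangle x p w; linarith [dist_comm p w]
            have hxu : dist x p - dist p u ≤ dist x u := by
              have := dist_triangle x u p; linarith [dist_comm u p]
            have hwyi : dist w yi ≤ dist w p + dist p u + dist u yi := by
              have h1 := dist_triangle w p yi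
              have h2 := dist_triangle p u yi
              linarith
            have : Metric.infDist w (C i) ≤ dist w yi :=
              Metric.infDist_le_dist_of_mem hyiC
            linarith
          · -- u on [yi,z] ⊆ C i
            have hsub : syz ⊆ C i := hconv i yi hyiC z hzi syz hsyz
            have h1 : Metric.infDist w (C i) ≤ dist w u :=
              Metric.infDist_le_dist_of_mem (hsub hu)
            have h2 : dist w u ≤ dist w p + dist p u := dist_triangle w p u
            linarith
      have hfw : f w ≤ r - δ := Finset.sup'_le _ _ (fun i _ => hclaim i)
      linarith [hrle w]
end
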